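/- arXiv:2004.08675 — 7 statements merged into one kernel-verified Lean document; each statement's English description precedes it below -/
import Mathlib

section
/- Let N ≥ 1 and let Q be a real N×N orthogonal matrix with det Q = (−1)^N. Then there exist nonzero vectors v^(1), …, v^(N) ∈ ℝ^N such that Q = H(v^(1)) · H(v^(2)) · ⋯ · H(v^(N)). -/
/-!
By the Cartan–Dieudonné theorem (`LinearIsometryEquiv.reflections_generate_dim`), the isometry
`x ↦ Q x` of `ℝᴺ` is a product of at most `N` reflections in hyperplanes `vᗮ`, and the matrix of
that reflection is `H(v)`. Factors with `v = 0` are trivial and can be dropped; each remaining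
factor has determinant `-1`, so `det Q = (-1)ᴺ` makes the number `m ≤ N` of factors congruent to
`N` mod 2, and padding with the `(N - m) / 2` trivial products `H(u) H(u)` gives exactly `N`.
-/

open scoped BigOperators Matrix

/-- The Householder reflection `H(v) = I - 2 v vᵀ / ‖v‖₂²`. -/
noncomputable def householder {N : ℕ} (v : Fin N → ℝ) : Matrix (Fin N) (Fin N) ℝ :=
  (1 : Matrix (Fin N) (Fin N) ℝ) - (2 / ∑ k, v k ^ 2) • Matrix.vecMulVec v v

open Matrix Submodule

theorem List.exists_ofFn_eq_of_length_eq {α : Type*} {l : List α} {n : ℕ} (h : l.length = n) :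
    ∃ f : Fin n → α, List.ofFn f = l := by
  subst h
  exact ⟨_, List.ofFn_getElem⟩

theorem even_sub_of_neg_one_pow_eq {R : Type*} [Monoid R] [HasDistribNeg R] (hR : (-1 : R) ≠ 1)
    {m n : ℕ} (hmn : m ≤ n) (h : (-1 : R) ^ m = (-1) ^ n) : Even (n - m) := by
  have hsq : (-1 : R) ^ m * (-1) ^ m = 1 := by
    rw [← pow_add, ← two_mul, pow_mul, neg_one_sq, one_pow]
  refine (neg_one_pow_eq_one_iff_even hR).mp ?_
  calc (-1 : R) ^ (n - m) = (-1) ^ m * (-1) ^ m * (-1) ^ (n - m) := by rw [hsq, one_mul]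
    _ = (-1) ^ m * (-1) ^ n := by rw [mul_assoc, ← pow_add, Nat.add_sub_cancel' hmn]
    _ = 1 := by rw [← h, hsq]

section Householder

variable {N : ℕ}

theorem toEuclideanCLM_householder (v : EuclideanSpace ℝ (Fin N)) :
    toEuclideanCLM (𝕜 := ℝ) (householder v.ofLp) =
      ((ℝ ∙ v)ᗮ.reflection : EuclideanSpace ℝ (Fin N) →L[ℝ] _) := by
  ext x i
  simp only [ofLp_toEuclideanCLM, ContinuousLinearEquiv.coe_coe,
    LinearIsometryEquiv.coe_toContinuousLinearEquiv, reflection_orthogonal_apply,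
    reflection_singleton_apply, PiLp.inner_apply, householder]
  simp [EuclideanSpace.real_norm_sq_eq, mulVec, dotProduct, vecMulVec_apply, sub_mul,
    Finset.mul_sum, Finset.sum_mul, Finset.sum_div, one_apply]
  exact Finset.sum_congr rfl fun _ _ => by ring

/-- `2 / 0 = 0` in Lean, so `H(0)` is the identity rather than undefined. -/
theorem householder_zero : householder (0 : Fin N → ℝ) = 1 := by
  simp [householder]

theorem householder_mul_self (v : Fin N → ℝ) : householder v * householder v = 1 := by
  apply toEuclideanCLM (𝕜 := ℝ) |>.injective
  change toEuclideanCLM (𝕜 := ℝ) _ = toEuclideanCLM (𝕜 := ℝ) _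
  rw [map_mul, map_one, ← WithLp.ofLp_toLp 2 v, toEuclideanCLM_householder]
  ext x
  simp

theorem det_householder {v : Fin N → ℝ} (hv : v ≠ 0) : (householder v).det = -1 := by
  have hv' : WithLp.toLp 2 v ≠ 0 := by simpa using hv
  rw [← LinearMap.det_toLin (PiLp.basisFun 2 ℝ (Fin N)), ← toLpLin_eq_toLin,
    ← WithLp.ofLp_toLp 2 v, ← coe_toEuclideanCLM_eq_toEuclideanLin, toEuclideanCLM_householder]
  refine (det_reflection _).trans ?_
  rw [orthogonal_orthogonal, finrank_span_singleton hv', pow_one]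

theorem exists_list_householder_of_orthogonal {Q : Matrix (Fin N) (Fin N) ℝ}
    (hQ : Qᵀ * Q = 1) : ∃ l : List (Fin N → ℝ), l.length ≤ N ∧ Q = (l.map householder).prod := by
  have hU : toEuclideanCLM (𝕜 := ℝ) Q ∈ unitary _ :=
    Unitary.map_mem _ (mem_unitaryGroup_iff'.mpr (by simpa [star_eq_conjTranspose] using hQ))
  obtain ⟨l, hlen, hφ⟩ := (Unitary.linearIsometryEquiv ⟨_, hU⟩).reflections_generate_dim
  refine ⟨l.map WithLp.ofLp, by simpa using hlen, toEuclideanCLM.injective ?_⟩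
  have hQ_prod := congrArg (fun φ => (Unitary.linearIsometryEquiv.symm φ).val) hφ
  simp only [MulEquiv.symm_apply_apply, map_list_prod] at hQ_prod
  change toEuclideanCLM (𝕜 := ℝ) Q = toEuclideanCLM (𝕜 := ℝ) _
  simp [hQ_prod, map_list_prod, Function.comp_def, toEuclideanCLM_householder]

theorem prod_map_householder_filter_ne_zero (l : List (Fin N → ℝ)) :
    ((l.filter (· ≠ 0)).map householder).prod = (l.map householder).prod := by
  induction l with
  | nil => rfl
  | cons v l ih =>
    by_cases hv : v = 0
    · rw [List.filter_cons_of_neg (by simpa using hv), ih, List.map_cons, List.prod_cons, hv,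
        householder_zero, one_mul]
    · rw [List.filter_cons_of_pos (by simpa using hv), List.map_cons, List.prod_cons, ih,
        List.map_cons, List.prod_cons]

theorem exists_list_householder_ne_zero_of_orthogonal {Q : Matrix (Fin N) (Fin N) ℝ}
    (hQ : Qᵀ * Q = 1) : ∃ l : List (Fin N → ℝ),
      (∀ v ∈ l, v ≠ 0) ∧ l.length ≤ N ∧ Q = (l.map householder).prod := by
  obtain ⟨l, hlen, rfl⟩ := exists_list_householder_of_orthogonal hQ
  refine ⟨l.filter (· ≠ 0), fun v hv => ?_, (List.length_filter_le _ _).trans hlen,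
    (prod_map_householder_filter_ne_zero l).symm⟩
  simpa using (List.mem_filter.mp hv).2

theorem det_prod_map_householder {l : List (Fin N → ℝ)} (hl : ∀ v ∈ l, v ≠ 0) :
    (l.map householder).prod.det = (-1) ^ l.length := by
  induction l with
  | nil => simp
  | cons v l ih =>
    simp only [List.forall_mem_cons] at hl
    rw [List.map_cons, List.prod_cons, det_mul, det_householder hl.1, ih hl.2, List.length_cons,
      pow_succ']

theorem prod_map_householder_replicate_of_even {k : ℕ} (u : Fin N → ℝ) (hk : Even k) :
    ((List.replicate k u).map householder).prod = 1 := by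
  obtain ⟨j, rfl⟩ := hk
  rw [List.map_replicate, List.prod_replicate, ← two_mul, pow_mul, sq, householder_mul_self,
    one_pow]

theorem exists_list_householder_length_eq {l : List (Fin N → ℝ)}
    (hl : ∀ v ∈ l, v ≠ 0) (hlen : l.length ≤ N) (heven : Even (N - l.length)) :
    ∃ l' : List (Fin N → ℝ), (∀ v ∈ l', v ≠ 0) ∧ l'.length = N ∧
      (l'.map householder).prod = (l.map householder).prod := by
  refine ⟨l ++ List.replicate (N - l.length) (fun _ => 1), fun v hv => ?_, by simp; omega, ?_⟩
  · rcases List.mem_append.mp hv with hv | hv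
    · exact hl v hv
    · obtain ⟨hpad, rfl⟩ := List.mem_replicate.mp hv
      exact fun h => one_ne_zero (congrFun h ⟨0, by omega⟩)
  · rw [List.map_append, List.prod_append, prod_map_householder_replicate_of_even _ heven, mul_one]

end Householder

theorem orthogonal_eq_prod_householder_general {N : ℕ}
    (Q : Matrix (Fin N) (Fin N) ℝ) (hQ : Qᵀ * Q = 1) (hdet : Q.det = (-1 : ℝ) ^ N) :
    ∃ v : Fin N → Fin N → ℝ, (∀ l, v l ≠ 0) ∧
      Q = (List.ofFn fun l => householder (v l)).prod := by
  obtain ⟨l, hl, hlen, rfl⟩ := exists_list_householder_ne_zero_of_orthogonal hQ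
  rw [det_prod_map_householder hl] at hdet
  obtain ⟨l', hl', hlen', hprod⟩ := exists_list_householder_length_eq hl hlen
    (even_sub_of_neg_one_pow_eq (by norm_num) hlen hdet)
  obtain ⟨v, rfl⟩ := List.exists_ofFn_eq_of_length_eq hlen'
  refine ⟨v, fun i => hl' _ (List.mem_ofFn.mpr ⟨i, rfl⟩), ?_⟩
  rw [← hprod, List.map_ofFn, Function.comp_def]

/-- Any `N × N` orthogonal matrix `Q` with `det Q = (-1)^N` (for `N ≥ 1`) is a product of
`N` Householder reflections `H(v⁽¹⁾) ⋯ H(v⁽ᴺ⁾)` with all `v⁽ˡ⁾` nonzero. -/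
theorem orthogonal_eq_prod_householder {N : ℕ} (hN : 1 ≤ N)
    (Q : Matrix (Fin N) (Fin N) ℝ) (hQ : Qᵀ * Q = 1) (hdet : Q.det = (-1 : ℝ) ^ N) :
    ∃ v : Fin N → Fin N → ℝ, (∀ l, v l ≠ 0) ∧
      Q = (List.ofFn fun l => householder (v l)).prod :=
  orthogonal_eq_prod_householder_general Q hQ hdet
end

section
/- Let v^(1), …, v^(L) ∈ ℝ^N be nonzero vectors, let U ∈ ℝ^{N×L} be the matrix whose l-th column is v^(l)/‖v^(l)‖₂, and let S = (1/2)I + striu(UᵀU). Then S is invertible and H(v^(1)) · ⋯ · H(v^(L)) = I − U S⁻¹ Uᵀ. -/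
/-!
Write `V` for the matrix whose rows are the normalized vectors, so `U = Vᵀ`. Peeling off the
first reflector, `I - (I - 2 v vᵀ) P' = Vᵀ X` as soon as `I - P' = V'ᵀ X'` for the remaining rows
`V'`, with `X` obtained from `X'` by prepending the row `2 (vᵀ - (V' v)ᵀ X')`. In block form
`S = [[1/2, (V' v)ᵀ], [0, S']]`, so `S X = V` follows from `S' X' = V'`. Since `S` is upper
triangular with diagonal `1/2`, it is invertible and `X = S⁻¹ Uᵀ`.
-/

open scoped BigOperators Matrix

/-- `striu M` zeroes out all diagonal and lower-triangular entries of `M`. -/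
def striu {L : ℕ} (M : Matrix (Fin L) (Fin L) ℝ) : Matrix (Fin L) (Fin L) ℝ :=
  fun i j => if i < j then M i j else 0

open Matrix

theorem isUnit_smul_one_add_striu {L : ℕ} {c : ℝ} (hc : c ≠ 0) (M : Matrix (Fin L) (Fin L) ℝ) :
    IsUnit (c • (1 : Matrix (Fin L) (Fin L) ℝ) + striu M) := by
  have hupper : (c • (1 : Matrix (Fin L) (Fin L) ℝ) + striu M).IsUpperTriangular := by
    intro i j (hji : j < i)
    simp [striu, one_apply, hji.ne', hji.not_gt]
  rw [isUnit_iff_isUnit_det, det_of_isUpperTriangular hupper]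
  simpa [striu] using pow_ne_zero L hc

theorem transpose_mul_eq_vecMulVec_add {α : Type*} [NonUnitalNonAssocSemiring α] {L m n : ℕ}
    (V : Matrix (Fin (L + 1)) (Fin m) α) (X : Matrix (Fin (L + 1)) (Fin n) α) :
    Vᵀ * X = vecMulVec (V 0) (X 0) + (V.submatrix Fin.succ id)ᵀ * X.submatrix Fin.succ id := by
  ext i j
  simp [mul_apply, Fin.sum_univ_succ, vecMulVec_apply]

noncomputable def triangularFactor {L N : ℕ} (V : Matrix (Fin L) (Fin N) ℝ) :
    Matrix (Fin L) (Fin L) ℝ :=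
  (1 / 2 : ℝ) • 1 + striu (V * Vᵀ)

noncomputable def reflectionProd {L N : ℕ} (V : Matrix (Fin L) (Fin N) ℝ) :
    Matrix (Fin N) (Fin N) ℝ :=
  (List.ofFn fun l => 1 - (2 : ℝ) • vecMulVec (V l) (V l)).prod

section succ

variable {L N : ℕ} (V : Matrix (Fin (L + 1)) (Fin N) ℝ) (X : Matrix (Fin (L + 1)) (Fin N) ℝ)

theorem triangularFactor_mul_zero :
    (triangularFactor V * X) 0 =
      (1 / 2 : ℝ) • X 0 + (V.submatrix Fin.succ id *ᵥ V 0) ᵥ* X.submatrix Fin.succ id := by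
  ext b
  simp [triangularFactor, striu, mul_apply, Fin.sum_univ_succ, one_apply,
    (Fin.succ_ne_zero _).symm, Fin.succ_pos, vecMul, mulVec, dotProduct, mul_comm]

theorem triangularFactor_mul_succ (i : Fin L) :
    (triangularFactor V * X) i.succ =
      (triangularFactor (V.submatrix Fin.succ id) * X.submatrix Fin.succ id) i := by
  ext b
  simp [triangularFactor, striu, mul_apply, Fin.sum_univ_succ, one_apply, Fin.succ_ne_zero,
    (Fin.succ_pos _).not_gt]

theorem reflectionProd_succ :
    reflectionProd V =
      (1 - (2 : ℝ) • vecMulVec (V 0) (V 0)) * reflectionProd (V.submatrix Fin.succ id) := by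
  simp only [reflectionProd, List.ofFn_succ, List.prod_cons]
  rfl

end succ

theorem exists_triangularFactor_mul_eq {N : ℕ} : ∀ {L : ℕ} (V : Matrix (Fin L) (Fin N) ℝ),
    ∃ X : Matrix (Fin L) (Fin N) ℝ, triangularFactor V * X = V ∧ 1 - reflectionProd V = Vᵀ * X
  | 0, V => ⟨0, Subsingleton.elim _ _, by simp [reflectionProd]⟩
  | L + 1, V => by
    set V' := V.submatrix Fin.succ id
    set v := V 0
    obtain ⟨X', hSX', hX'⟩ := exists_triangularFactor_mul_eq V'
    set x := (2 : ℝ) • (v - (V' *ᵥ v) ᵥ* X')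
    set X : Matrix (Fin (L + 1)) (Fin N) ℝ := of (Fin.cons x X')
    have hX0 : X 0 = x := rfl
    have hXtail : X.submatrix Fin.succ id = X' := rfl
    refine ⟨X, ?_, ?_⟩
    · funext i
      refine Fin.cases ?_ (fun i => ?_) i
      · rw [triangularFactor_mul_zero, hX0, hXtail, smul_smul, one_div,
          inv_mul_cancel₀ two_ne_zero, one_smul]
        exact sub_add_cancel _ _
      · rw [triangularFactor_mul_succ, hXtail]
        exact congrFun hSX' i
    · calc 1 - reflectionProd V = 1 - (1 - (2 : ℝ) • vecMulVec v v) * (1 - V'ᵀ * X') := by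
            rw [reflectionProd_succ, ← hX', sub_sub_cancel]
        _ = (2 : ℝ) • (vecMulVec v v - vecMulVec v v * (V'ᵀ * X')) + V'ᵀ * X' := by
            simp only [sub_mul, mul_sub, one_mul, mul_one, smul_mul_assoc, smul_sub]
            abel
        _ = Vᵀ * X := by
            rw [transpose_mul_eq_vecMulVec_add, hX0, hXtail, vecMulVec_mul, ← vecMul_vecMul,
              vecMul_transpose, ← vecMulVec_sub, vecMulVec_smul]

theorem householder_eq_one_sub_two_smul_vecMulVec {N : ℕ} (v : Fin N → ℝ) :
    householder v =
      1 - (2 : ℝ) •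
        vecMulVec (fun k => v k / √(∑ k, v k ^ 2)) (fun k => v k / √(∑ k, v k ^ 2)) := by
  ext a b
  simp only [householder, Matrix.sub_apply, Matrix.smul_apply, vecMulVec_apply, smul_eq_mul]
  rw [div_mul_div_comm, Real.mul_self_sqrt (by positivity)]
  ring

theorem cwy_transform_general {N L : ℕ} (v : Fin L → Fin N → ℝ) :
    let U : Matrix (Fin N) (Fin L) ℝ := fun i l => v l i / Real.sqrt (∑ k, v l k ^ 2)
    let S : Matrix (Fin L) (Fin L) ℝ := (1 / 2 : ℝ) • (1 : Matrix (Fin L) (Fin L) ℝ)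
      + striu (Uᵀ * U)
    IsUnit S ∧
      (List.ofFn fun l => householder (v l)).prod =
        (1 : Matrix (Fin N) (Fin N) ℝ) - U * S⁻¹ * Uᵀ := by
  intro U S
  have hS : IsUnit S := isUnit_smul_one_add_striu (by norm_num) _
  obtain ⟨X, hSX, hX⟩ := exists_triangularFactor_mul_eq Uᵀ
  change S * X = Uᵀ at hSX
  change 1 - reflectionProd Uᵀ = U * X at hX
  have hX_eq : X = S⁻¹ * Uᵀ := by
    rw [← hSX, nonsing_inv_mul_cancel_left _ _ ((isUnit_iff_isUnit_det _).mp hS)]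
  have hprod : (List.ofFn fun l => householder (v l)).prod = reflectionProd Uᵀ := by
    simp only [householder_eq_one_sub_two_smul_vecMulVec]
    rfl
  refine ⟨hS, ?_⟩
  rw [hprod, Matrix.mul_assoc, ← hX_eq, ← hX, sub_sub_cancel]

/-- The compact WY representation: if `U` has columns `v⁽ˡ⁾/‖v⁽ˡ⁾‖₂` and
`S = ½ I + striu(UᵀU)`, then `S` is invertible and
`H(v⁽¹⁾) ⋯ H(v⁽ᴸ⁾) = I - U S⁻¹ Uᵀ`. -/
theorem cwy_transform {N L : ℕ} (v : Fin L → Fin N → ℝ) (hv : ∀ l, v l ≠ 0) :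
    let U : Matrix (Fin N) (Fin L) ℝ := fun i l => v l i / Real.sqrt (∑ k, v l k ^ 2)
    let S : Matrix (Fin L) (Fin L) ℝ := (1 / 2 : ℝ) • (1 : Matrix (Fin L) (Fin L) ℝ)
      + striu (Uᵀ * U)
    IsUnit S ∧
      (List.ofFn fun l => householder (v l)).prod =
        (1 : Matrix (Fin N) (Fin N) ℝ) - U * S⁻¹ * Uᵀ :=
  cwy_transform_general v
end

section
/- Let M < N and let v^(1), …, v^(M) ∈ ℝ^N be nonzero vectors. Let U ∈ ℝ^{N×M} be the matrix whose l-th column is v^(l)/‖v^(l)‖₂, let U₁ be the upper M×M submatrix of U, and let S = (1/2)I + striu(UᵀU). Then S is invertible and the matrix γ(v^(1),…,v^(M)) = [I; 0] − U S⁻¹ U₁ᵀ ∈ ℝ^{N×M} (where [I; 0] denotes the N×M matrix consisting of the M×M identity stacked above an (N−M)×M zero block) satisfies γ(v^(1),…,v^(M))ᵀ γ(v^(1),…,v^(M)) = I, i.e. γ(v^(1),…,v^(M)) belongs to the Stiefel manifold St(N, M). -/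
open scoped BigOperators Matrix

/-!
Since `UᵀU` is symmetric with unit diagonal, `S = ½ I + striu(UᵀU)` splits it as
`UᵀU = S + Sᵀ`, and `S` is upper triangular with diagonal `½`, hence invertible.
Multiplying the splitting by `S⁻ᵀ` and `S⁻¹` gives `S⁻ᵀ UᵀU S⁻¹ = S⁻¹ + S⁻ᵀ`, which is exactly
what makes the cross terms of `γᵀγ` cancel, using `[I; 0]ᵀ[I; 0] = I` and `[I; 0]ᵀU = U₁`.
-/

namespace Matrix

theorem transpose_ite_val_eq_mul {R α : Type*} [NonAssocSemiring R]
    {M N : ℕ} (hMN : M ≤ N) (B : Matrix (Fin N) α R) :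
    (of fun (i : Fin N) (j : Fin M) => if (i : ℕ) = j then (1 : R) else 0)ᵀ * B =
      B.submatrix (Fin.castLE hMN) id := by
  ext i l
  rw [mul_apply, Finset.sum_eq_single (Fin.castLE hMN i)]
  · simp
  · intro k _ hk
    rw [transpose_apply, of_apply, if_neg (by simpa [Fin.ext_iff] using hk), zero_mul]
  · simp

variable {R m n : Type*} [CommRing R] [Fintype m] [Fintype n] [DecidableEq n]

theorem inv_transpose_mul_mul_inv_of_add_transpose_eq {S G : Matrix n n R}
    (hS : IsUnit S.det) (hSG : S + Sᵀ = G) : S⁻¹ᵀ * G * S⁻¹ = S⁻¹ᵀ + S⁻¹ := by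
  have hSS : S * S⁻¹ = 1 := mul_nonsing_inv S hS
  rw [← hSG, mul_add, add_mul, mul_assoc, hSS, mul_one, ← transpose_mul, hSS, transpose_one,
    one_mul]

theorem transpose_mul_self_sub_mul_inv_mul_eq_one {E U : Matrix m n R} {S U₁ : Matrix n n R}
    (hS : IsUnit S.det) (hE : Eᵀ * E = 1) (hSU : S + Sᵀ = Uᵀ * U) (hU₁ : Eᵀ * U = U₁) :
    (E - U * S⁻¹ * U₁ᵀ)ᵀ * (E - U * S⁻¹ * U₁ᵀ) = 1 := by
  have hU₁' : Uᵀ * E = U₁ᵀ := by rw [← hU₁, transpose_mul, transpose_transpose]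
  have hmid := inv_transpose_mul_mul_inv_of_add_transpose_eq hS hSU
  calc (E - U * S⁻¹ * U₁ᵀ)ᵀ * (E - U * S⁻¹ * U₁ᵀ)
      = Eᵀ * E - Eᵀ * U * S⁻¹ * U₁ᵀ - U₁ * S⁻¹ᵀ * (Uᵀ * E)
        + U₁ * (S⁻¹ᵀ * (Uᵀ * U) * S⁻¹) * U₁ᵀ := by
        simp only [transpose_sub, transpose_mul, transpose_transpose, Matrix.sub_mul,
          Matrix.mul_sub, Matrix.mul_assoc]
        abel
    _ = 1 := by
        rw [hE, hU₁, hU₁', hmid, mul_add, add_mul]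
        abel

end Matrix

theorem isUpperTriangular_half_smul_one_add_striu {L : ℕ} (A : Matrix (Fin L) (Fin L) ℝ) :
    ((1 / 2 : ℝ) • 1 + striu A).IsUpperTriangular := by
  intro i j (hij : j < i)
  simp [striu, hij.ne', not_lt.mpr hij.le]

theorem isUnit_det_half_smul_one_add_striu {L : ℕ} (A : Matrix (Fin L) (Fin L) ℝ) :
    IsUnit ((1 / 2 : ℝ) • 1 + striu A).det := by
  rw [Matrix.det_of_isUpperTriangular (isUpperTriangular_half_smul_one_add_striu A)]
  simp [striu]

theorem half_smul_one_add_striu_add_transpose {L : ℕ} {A : Matrix (Fin L) (Fin L) ℝ}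
    (hA : A.IsSymm) (hdiag : ∀ i, A i i = 1) :
    (1 / 2 : ℝ) • 1 + striu A + ((1 / 2 : ℝ) • 1 + striu A)ᵀ = A := by
  ext i j
  rcases lt_trichotomy i j with h | rfl | h
  · simp [striu, h, h.ne, not_lt.mpr h.le]
  · norm_num [striu, hdiag]
  · simpa [striu, h, h.ne', not_lt.mpr h.le] using hA.apply i j

theorem sum_div_sqrt_sum_sq_mul_self {ι : Type*} [Fintype ι] {v : ι → ℝ} (hv : v ≠ 0) :
    ∑ i, v i / √(∑ k, v k ^ 2) * (v i / √(∑ k, v k ^ 2)) = 1 := by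
  have hpos : 0 < ∑ k, v k ^ 2 := by
    obtain ⟨k, hk⟩ : ∃ k, v k ≠ 0 := Function.ne_iff.mp hv
    exact Finset.sum_pos' (fun i _ => sq_nonneg _) ⟨k, Finset.mem_univ k, by positivity⟩
  simp_rw [div_mul_div_comm, Real.mul_self_sqrt hpos.le, ← sq, ← Finset.sum_div]
  exact div_self hpos.ne'

/-- The truncated CWY map lands in the Stiefel manifold: with `U` the matrix of
normalized columns `v⁽ˡ⁾/‖v⁽ˡ⁾‖₂`, `U₁` its upper `M × M` submatrix and
`S = ½ I + striu(UᵀU)`, `S` is invertible and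
`γ = [I; 0] - U S⁻¹ U₁ᵀ` satisfies `γᵀ γ = I`. -/
theorem tcwy_mem_stiefel {M N : ℕ} (hMN : M < N) (v : Fin M → Fin N → ℝ)
    (hv : ∀ l, v l ≠ 0) :
    let U : Matrix (Fin N) (Fin M) ℝ := fun i l => v l i / Real.sqrt (∑ k, v l k ^ 2)
    let U₁ : Matrix (Fin M) (Fin M) ℝ := fun i l => U (Fin.castLE hMN.le i) l
    let S : Matrix (Fin M) (Fin M) ℝ := (1 / 2 : ℝ) • (1 : Matrix (Fin M) (Fin M) ℝ)
      + striu (Uᵀ * U)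
    let incl : Matrix (Fin N) (Fin M) ℝ := fun i j => if (i : ℕ) = (j : ℕ) then 1 else 0
    let γ : Matrix (Fin N) (Fin M) ℝ := incl - U * S⁻¹ * U₁ᵀ
    IsUnit S ∧ γᵀ * γ = 1 := by
  intro U U₁ S incl γ
  have hS : IsUnit S.det := isUnit_det_half_smul_one_add_striu _
  have hSU : S + Sᵀ = Uᵀ * U :=
    half_smul_one_add_striu_add_transpose
      (by rw [Matrix.IsSymm, Matrix.transpose_mul, Matrix.transpose_transpose])
      fun l => sum_div_sqrt_sum_sq_mul_self (hv l)
  have hincl : inclᵀ * incl = 1 := by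
    refine (Matrix.transpose_ite_val_eq_mul hMN.le incl).trans ?_
    ext i j
    rw [Matrix.submatrix_apply]
    simp [incl, Matrix.one_apply, Fin.ext_iff]
  exact ⟨(Matrix.isUnit_iff_isUnit_det S).mpr hS, Matrix.transpose_mul_self_sub_mul_inv_mul_eq_one
    hS hincl hSU (Matrix.transpose_ite_val_eq_mul hMN.le U)⟩
end

section
/- Let B, C ∈ ℝ^{N×D} with D ≤ N be such that A = B Cᵀ is skew-symmetric (A = −Aᵀ), and let Ω ∈ ℝ^{N×M}. Then the D×D matrix I + (1/2) Cᵀ B is invertible, the Cayley transform Cayley(A) = (I + A/2)⁻¹ (I − A/2) is well defined, and Cayley(A) Ω = Ω − B (I + (1/2) Cᵀ B)⁻¹ (Cᵀ Ω). -/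
/-!
With `X = B`, `Y = ½ Cᵀ` we have `A/2 = X Y`. Skew-symmetry makes
`(1 + A/2)(1 − A/2) = 1 + (A/2)ᵀ (A/2)` positive definite, so `1 + X Y` is invertible, and by
the Weinstein–Aronszajn identity `det (1 + X Y) = det (1 + Y X)` so is `1 + Y X`. The formula
is the push-through identity `(1 + X Y)(1 − 2 X (1 + Y X)⁻¹ Y) = 1 − X Y`.
-/

open scoped Matrix

namespace Matrix

variable {n d R : Type*} [Fintype n] [DecidableEq n] [Fintype d] [DecidableEq d]

theorem isUnit_one_add_of_transpose_eq_neg {S : Matrix n n ℝ} (hS : Sᵀ = -S) :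
    IsUnit (1 + S) := by
  have hpos : 0 < ((1 + S) * (1 - S)).det := by
    have hsq : (1 + S) * (1 - S) = 1 + Sᵀ * S := by rw [hS]; noncomm_ring
    rw [hsq]
    exact (PosDef.one.add_posSemidef (by simpa using posSemidef_conjTranspose_mul_self S)).det_pos
  rw [det_mul] at hpos
  exact (isUnit_iff_isUnit_det _).mpr (isUnit_iff_ne_zero.mpr (left_ne_zero_of_mul hpos.ne'))

variable [CommRing R]

theorem isUnit_one_add_mul_comm (X : Matrix n d R) (Y : Matrix d n R) :
    IsUnit (1 + X * Y) ↔ IsUnit (1 + Y * X) := by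
  rw [isUnit_iff_isUnit_det, isUnit_iff_isUnit_det, det_one_add_mul_comm]

theorem inv_one_add_mul_mul_one_sub_mul (X : Matrix n d R) (Y : Matrix d n R)
    (h : IsUnit (1 + Y * X)) :
    (1 + X * Y)⁻¹ * (1 - X * Y) = 1 - (2 : R) • (X * (1 + Y * X)⁻¹ * Y) := by
  have hW : (1 + Y * X) * (1 + Y * X)⁻¹ = 1 := mul_nonsing_inv _ ((isUnit_iff_isUnit_det _).mp h)
  have hfactor : (1 + X * Y) * (1 - (2 : R) • (X * (1 + Y * X)⁻¹ * Y)) = 1 - X * Y := by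
    calc (1 + X * Y) * (1 - (2 : R) • (X * (1 + Y * X)⁻¹ * Y))
        = 1 + X * Y - (2 : R) • (X * ((1 + Y * X) * (1 + Y * X)⁻¹) * Y) := by
          simp only [Matrix.mul_add, Matrix.add_mul, Matrix.mul_sub,
            Matrix.mul_one, Matrix.one_mul, Matrix.mul_smul, Matrix.mul_assoc]
      _ = 1 - X * Y := by rw [hW, Matrix.mul_one, two_smul]; abel
  rw [← hfactor, nonsing_inv_mul_cancel_left]
  exact (isUnit_iff_isUnit_det _).mp ((isUnit_one_add_mul_comm X Y).mpr h)

end Matrix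

theorem cayley_woodbury_general {N D M : ℕ}
    (B C : Matrix (Fin N) (Fin D) ℝ) (hskew : B * Cᵀ = -(B * Cᵀ)ᵀ)
    (Ω : Matrix (Fin N) (Fin M) ℝ) :
    IsUnit ((1 : Matrix (Fin D) (Fin D) ℝ) + (1 / 2 : ℝ) • (Cᵀ * B)) ∧
    IsUnit ((1 : Matrix (Fin N) (Fin N) ℝ) + (1 / 2 : ℝ) • (B * Cᵀ)) ∧
    ((1 : Matrix (Fin N) (Fin N) ℝ) + (1 / 2 : ℝ) • (B * Cᵀ))⁻¹
        * ((1 : Matrix (Fin N) (Fin N) ℝ) - (1 / 2 : ℝ) • (B * Cᵀ)) * Ω =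
      Ω - B * ((1 : Matrix (Fin D) (Fin D) ℝ) + (1 / 2 : ℝ) • (Cᵀ * B))⁻¹ * (Cᵀ * Ω) := by
  have hBC : B * ((1 / 2 : ℝ) • Cᵀ) = (1 / 2 : ℝ) • (B * Cᵀ) := Matrix.mul_smul _ _ _
  have hCB : ((1 / 2 : ℝ) • Cᵀ) * B = (1 / 2 : ℝ) • (Cᵀ * B) := Matrix.smul_mul _ _ _
  have hN : IsUnit ((1 : Matrix (Fin N) (Fin N) ℝ) + (1 / 2 : ℝ) • (B * Cᵀ)) := by
    refine Matrix.isUnit_one_add_of_transpose_eq_neg ?_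
    rw [Matrix.transpose_smul, neg_eq_iff_eq_neg.mp hskew.symm, smul_neg]
  have hD : IsUnit ((1 : Matrix (Fin D) (Fin D) ℝ) + (1 / 2 : ℝ) • (Cᵀ * B)) := by
    rwa [← hBC, Matrix.isUnit_one_add_mul_comm, hCB] at hN
  refine ⟨hD, hN, ?_⟩
  have hcayley := Matrix.inv_one_add_mul_mul_one_sub_mul B ((1 / 2 : ℝ) • Cᵀ) (by rwa [hCB])
  rw [hBC, hCB] at hcayley
  rw [hcayley, Matrix.sub_mul, Matrix.one_mul, Matrix.mul_smul, smul_smul]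
  norm_num [Matrix.mul_assoc]

/-- The Sherman–Morrison–Woodbury identity for the Cayley transform: if `A = B Cᵀ` is
skew-symmetric, then `I + ½ Cᵀ B` is invertible, `I + ½ A` is invertible (so that
`Cayley(A) = (I + A/2)⁻¹ (I − A/2)` is well defined) and
`Cayley(A) Ω = Ω − B (I + ½ Cᵀ B)⁻¹ (Cᵀ Ω)`. -/
theorem cayley_woodbury {N D M : ℕ} (hDN : D ≤ N)
    (B C : Matrix (Fin N) (Fin D) ℝ) (hskew : B * Cᵀ = -(B * Cᵀ)ᵀ)
    (Ω : Matrix (Fin N) (Fin M) ℝ) :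
    IsUnit ((1 : Matrix (Fin D) (Fin D) ℝ) + (1 / 2 : ℝ) • (Cᵀ * B)) ∧
    IsUnit ((1 : Matrix (Fin N) (Fin N) ℝ) + (1 / 2 : ℝ) • (B * Cᵀ)) ∧
    ((1 : Matrix (Fin N) (Fin N) ℝ) + (1 / 2 : ℝ) • (B * Cᵀ))⁻¹
        * ((1 : Matrix (Fin N) (Fin N) ℝ) - (1 / 2 : ℝ) • (B * Cᵀ)) * Ω =
      Ω - B * ((1 : Matrix (Fin D) (Fin D) ℝ) + (1 / 2 : ℝ) • (Cᵀ * B))⁻¹ * (Cᵀ * Ω) :=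
  cayley_woodbury_general B C hskew Ω
end

section
/- Let s′, s″ ∈ ℝ^N be unit vectors (‖s′‖₂ = ‖s″‖₂ = 1). Then the sum over all triples of indices 1 ≤ i, j₁, j₂ ≤ N of ( 4 s′_{j₁} s′_{j₂} s′_i − 4 s″_{j₁} s″_{j₂} s″_i − 2 (s′_{j₁} − s″_{j₁}) δ_{j₂,i} − 2 (s′_{j₂} − s″_{j₂}) δ_{j₁,i} )² is at most 8 (N + 60) ‖s′ − s″‖₂², where δ_{a,b} is the Kronecker delta. (This quantity equals ‖∇_{s′} H(s′) − ∇_{s″} H(s″)‖_F², the squared Frobenius distance between the derivative tensors of the Householder reflection at s′ and s″.) -/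
/-!
Write `c = ∑ s'ₖ s''ₖ` and `D = ‖s' − s''‖² = 2 − 2c`. Splitting each entry into its cubic part and
its Kronecker part and expanding the square, the sum is exactly `32 (1 − c³) + 8 (N − 3) D`. Since
`1 − c³ = (1 − c)(1 + c + c²) ≤ 3 (1 − c)` for `c ≥ −1`, it is at most `8 (N + 3) D`.
-/

open Finset

theorem one_sub_pow_three_le {c : ℝ} (hc : -2 ≤ c) : 1 - c ^ 3 ≤ 3 * (1 - c) := by
  nlinarith [mul_nonneg (sq_nonneg (1 - c)) (show 0 ≤ 2 + c by linarith)]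

section

variable {ι : Type*} [Fintype ι]

theorem sum_sum_sum_mul_mul_self (f : ι → ℝ) :
    ∑ i, ∑ j₁, ∑ j₂, f j₁ * f j₂ * f i = (∑ k, f k) ^ 3 := by
  simp only [← sum_mul, ← mul_sum]
  ring

theorem sum_sum_sum_sq_mul_mul_sub (x y : ι → ℝ) :
    ∑ i, ∑ j₁, ∑ j₂, (x j₁ * x j₂ * x i - y j₁ * y j₂ * y i) ^ 2
      = (∑ k, x k ^ 2) ^ 3 + (∑ k, y k ^ 2) ^ 3 - 2 * (∑ k, x k * y k) ^ 3 := by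
  have expand : ∀ i j₁ j₂, (x j₁ * x j₂ * x i - y j₁ * y j₂ * y i) ^ 2
      = x j₁ ^ 2 * x j₂ ^ 2 * x i ^ 2 + y j₁ ^ 2 * y j₂ ^ 2 * y i ^ 2
        - 2 * ((x j₁ * y j₁) * (x j₂ * y j₂) * (x i * y i)) := by
    intro i j₁ j₂; ring
  simp only [expand, sum_add_distrib, sum_sub_distrib, ← mul_sum, sum_sum_sum_mul_mul_self]

theorem sum_sub_sq_of_sum_sq_eq_one {x y : ι → ℝ} (hx : ∑ k, x k ^ 2 = 1)
    (hy : ∑ k, y k ^ 2 = 1) : ∑ k, (x k - y k) ^ 2 = 2 - 2 * ∑ k, x k * y k := by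
  simp only [sub_sq, sum_add_distrib, sum_sub_distrib, hx, hy, mul_assoc, ← mul_sum]
  ring

theorem neg_one_le_sum_mul_of_sum_sq_eq_one {x y : ι → ℝ} (hx : ∑ k, x k ^ 2 = 1)
    (hy : ∑ k, y k ^ 2 = 1) : -1 ≤ ∑ k, x k * y k := by
  have hsum : ∑ k, (x k + y k) ^ 2 = 2 + 2 * ∑ k, x k * y k := by
    simp only [add_sq, sum_add_distrib, hx, hy, mul_assoc, ← mul_sum]
    ring
  linarith [sum_nonneg fun k (_ : k ∈ univ) => sq_nonneg (x k + y k)]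

variable [DecidableEq ι]

theorem sum_sum_sum_sq_kronecker (d : ι → ℝ) :
    ∑ i, ∑ j₁, ∑ j₂,
        (d j₁ * (if j₂ = i then (1 : ℝ) else 0) + d j₂ * (if j₁ = i then (1 : ℝ) else 0)) ^ 2
      = 2 * (Fintype.card ι + 1) * ∑ k, d k ^ 2 := by
  have expand : ∀ i j₁ j₂ : ι,
      (d j₁ * (if j₂ = i then (1 : ℝ) else 0) + d j₂ * (if j₁ = i then (1 : ℝ) else 0)) ^ 2
        = (if j₂ = i then d j₁ ^ 2 else 0) + (if j₁ = i then d j₂ ^ 2 else 0)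
          + 2 * (if j₁ = i then (if j₂ = i then d j₁ ^ 2 else 0) else 0) := by
    intro i j₁ j₂
    split_ifs with h₁ h₂ <;> subst_vars <;> ring
  simp only [expand, sum_add_distrib, ← mul_sum, sum_ite_eq', sum_ite_irrel, sum_const_zero,
    mem_univ, if_true, sum_const, card_univ, nsmul_eq_mul]
  ring

theorem sum_sum_sum_mul_kronecker (x y d : ι → ℝ) :
    ∑ i, ∑ j₁, ∑ j₂, (x j₁ * x j₂ * x i - y j₁ * y j₂ * y i) *
        (d j₁ * (if j₂ = i then (1 : ℝ) else 0) + d j₂ * (if j₁ = i then (1 : ℝ) else 0))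
      = 2 * ((∑ k, x k ^ 2) * ∑ k, x k * d k - (∑ k, y k ^ 2) * ∑ k, y k * d k) := by
  have collapse₂ : ∀ i j, (x j * x i * x i - y j * y i * y i) * d j
      = x i ^ 2 * (x j * d j) - y i ^ 2 * (y j * d j) := by
    intro i j; ring
  have collapse₁ : ∀ i j, (x i * x j * x i - y i * y j * y i) * d j
      = x i ^ 2 * (x j * d j) - y i ^ 2 * (y j * d j) := by
    intro i j; ring
  simp only [mul_add, sum_add_distrib, mul_ite, mul_one, mul_zero, sum_ite_eq', sum_ite_irrel,
    sum_const_zero, mem_univ, if_true, collapse₁, collapse₂, sum_sub_distrib, ← mul_sum,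
    ← sum_mul]
  ring

/-- `householderDerivTensor s i j₁ j₂ = ∇_{s_i} H(s)_{j₁,j₂}` for a unit vector `s`. -/
def householderDerivTensor (s : ι → ℝ) (i j₁ j₂ : ι) : ℝ :=
  4 * s j₁ * s j₂ * s i
    - 2 * (s j₁ * (if j₂ = i then 1 else 0) + s j₂ * (if j₁ = i then 1 else 0))

theorem sum_sq_householderDerivTensor_sub {x y : ι → ℝ} (hx : ∑ k, x k ^ 2 = 1)
    (hy : ∑ k, y k ^ 2 = 1) :
    ∑ i, ∑ j₁, ∑ j₂, (householderDerivTensor x i j₁ j₂ - householderDerivTensor y i j₁ j₂) ^ 2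
      = 32 * (1 - (∑ k, x k * y k) ^ 3)
        + 8 * (Fintype.card ι - 3) * ∑ k, (x k - y k) ^ 2 := by
  set u : ι → ι → ι → ℝ := fun i j₁ j₂ => x j₁ * x j₂ * x i - y j₁ * y j₂ * y i
  set b : ι → ι → ι → ℝ := fun i j₁ j₂ =>
    (x j₁ - y j₁) * (if j₂ = i then (1 : ℝ) else 0) + (x j₂ - y j₂) * (if j₁ = i then 1 else 0)
  have expand : ∀ i j₁ j₂,
      (householderDerivTensor x i j₁ j₂ - householderDerivTensor y i j₁ j₂) ^ 2
        = 16 * u i j₁ j₂ ^ 2 - 16 * (u i j₁ j₂ * b i j₁ j₂) + 4 * b i j₁ j₂ ^ 2 := by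
    intro i j₁ j₂
    simp only [householderDerivTensor, u, b]
    ring
  have hdiff : ∑ k, x k * (x k - y k) - ∑ k, y k * (x k - y k) = ∑ k, (x k - y k) ^ 2 := by
    rw [← sum_sub_distrib]
    exact sum_congr rfl fun k _ => by ring
  simp only [expand, sum_add_distrib, sum_sub_distrib, ← mul_sum, u, b,
    sum_sum_sum_sq_mul_mul_sub, sum_sum_sum_mul_kronecker, sum_sum_sum_sq_kronecker, hx, hy]
  linear_combination (-32) * hdiff

theorem sum_sq_householderDerivTensor_sub_le {x y : ι → ℝ} (hx : ∑ k, x k ^ 2 = 1)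
    (hy : ∑ k, y k ^ 2 = 1) :
    ∑ i, ∑ j₁, ∑ j₂, (householderDerivTensor x i j₁ j₂ - householderDerivTensor y i j₁ j₂) ^ 2
      ≤ 8 * (Fintype.card ι + 3) * ∑ k, (x k - y k) ^ 2 := by
  have hc := neg_one_le_sum_mul_of_sum_sq_eq_one hx hy
  rw [sum_sq_householderDerivTensor_sub hx hy, sum_sub_sq_of_sum_sq_eq_one hx hy]
  nlinarith [one_sub_pow_three_le (c := ∑ k, x k * y k) (by linarith)]

end

/-- For unit vectors `s′, s″ ∈ ℝᴺ`, the squared Frobenius distance between the derivative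
tensors of the Householder reflection at `s′` and `s″` is at most `8 (N + 60) ‖s′ − s″‖₂²`. -/
theorem householder_derivative_tensor_diff_bound {N : ℕ} (s' s'' : Fin N → ℝ)
    (hs' : ∑ k, s' k ^ 2 = 1) (hs'' : ∑ k, s'' k ^ 2 = 1) :
    ∑ i, ∑ j₁, ∑ j₂,
        (4 * s' j₁ * s' j₂ * s' i - 4 * s'' j₁ * s'' j₂ * s'' i
          - 2 * (s' j₁ - s'' j₁) * (if j₂ = i then (1 : ℝ) else 0)
          - 2 * (s' j₂ - s'' j₂) * (if j₁ = i then (1 : ℝ) else 0)) ^ 2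
      ≤ 8 * ((N : ℝ) + 60) * ∑ i, (s' i - s'' i) ^ 2 := by
  have entry : ∀ i j₁ j₂,
      4 * s' j₁ * s' j₂ * s' i - 4 * s'' j₁ * s'' j₂ * s'' i
          - 2 * (s' j₁ - s'' j₁) * (if j₂ = i then (1 : ℝ) else 0)
          - 2 * (s' j₂ - s'' j₂) * (if j₁ = i then (1 : ℝ) else 0)
        = householderDerivTensor s' i j₁ j₂ - householderDerivTensor s'' i j₁ j₂ := by
    intro i j₁ j₂
    simp only [householderDerivTensor]
    ring
  simp only [entry]
  refine (sum_sq_householderDerivTensor_sub_le hs' hs'').trans ?_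
  rw [Fintype.card_fin]
  gcongr
  norm_num
end

section
/- Let A > 0, let f : ℝ^{N×N} → ℝ be differentiable, and let v^(1), …, v^(L) ∈ ℝ^N satisfy ‖v^(l)‖₂ ≥ A for all l. Define F(v^(1), …, v^(L)) = f( H(v^(1)) ⋯ H(v^(L)) ). Then for every l ∈ {1, …, L}, ‖ ∇_{v^(l)} F ‖₂² ≤ (24/A²) N (N + 2) ‖ ∇f( H(v^(1)) ⋯ H(v^(L)) ) ‖_F², and summing over l, Σ_{l=1}^{L} ‖ ∇_{v^(l)} F ‖₂² ≤ (24/A²) N (N + 2) L ‖ ∇f( H(v^(1)) ⋯ H(v^(L)) ) ‖_F². -/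
open scoped BigOperators Matrix

attribute [local instance] Matrix.frobeniusSeminormedAddCommGroup
  Matrix.frobeniusNormedAddCommGroup Matrix.frobeniusNormedSpace

/-- The ordered product of Householder reflections `H(v⁽¹⁾) ⋯ H(v⁽ᴸ⁾)`. -/
noncomputable def prodHouseholder {N L : ℕ} (vs : Fin L → Fin N → ℝ) :
    Matrix (Fin N) (Fin N) ℝ :=
  (List.ofFn fun l => householder (vs l)).prod

/-- The matrix of partial derivatives `∇f(X)` of `f : ℝ^{N×N} → ℝ` at `X`. -/
noncomputable def matGrad {N : ℕ} (f : Matrix (Fin N) (Fin N) ℝ → ℝ)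
    (X : Matrix (Fin N) (Fin N) ℝ) : Matrix (Fin N) (Fin N) ℝ :=
  fun i j => fderiv ℝ f X (Matrix.single i j 1)

/-- The gradient in `ℝᴺ` of `(v⁽¹⁾, …, v⁽ᴸ⁾) ↦ f(H(v⁽¹⁾) ⋯ H(v⁽ᴸ⁾))` with respect to the
`l`-th argument `v⁽ˡ⁾`. -/
noncomputable def partialGradH {N L : ℕ} (f : Matrix (Fin N) (Fin N) ℝ → ℝ)
    (vs : Fin L → Fin N → ℝ) (l : Fin L) : Fin N → ℝ :=
  fun i => fderiv ℝ (fun w : Fin N → ℝ => f (prodHouseholder (Function.update vs l w)))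
    (vs l) (Pi.single i 1)

/-!
Write `F` near `v = v⁽ˡ⁾` as `w ↦ f (P₁ H(w) P₂)`, where `P₁`, `P₂` are the products of the other
reflections and hence orthogonal. The `i`-th partial derivative is the Frobenius pairing of
`∇f` with `P₁ (DH(v) eᵢ) P₂`, so by Cauchy–Schwarz and orthogonal invariance of the Frobenius norm
its square is at most `‖∇f‖_F² ‖DH(v) eᵢ‖_F²`. Writing `p` for the component of `u` orthogonal to
`v`, `DH(v) u = -(2/‖v‖²) (p vᵀ + v pᵀ)`, whose squared Frobenius norm is
`8 ‖p‖² / ‖v‖² ≤ 8 ‖u‖² / ‖v‖²`. Summing over the basis gives `8 N / ‖v‖² ≤ 8 N / A²`, which is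
below `24 N (N + 2) / A²`.
-/

open Matrix

section FrobeniusSum

variable {m n : Type*} [Fintype m] [Fintype n]

lemma sum_sq_eq_trace_mul_transpose (M : Matrix m n ℝ) :
    ∑ a, ∑ b, M a b ^ 2 = trace (M * Mᵀ) := by
  simp [trace, mul_apply, sq]

lemma sum_sum_mul_sq_le_sq_mul_sq (G M : Matrix m n ℝ) :
    (∑ a, ∑ b, G a b * M a b) ^ 2 ≤ (∑ a, ∑ b, G a b ^ 2) * ∑ a, ∑ b, M a b ^ 2 := by
  simpa only [Fintype.sum_prod_type] using
    Finset.sum_mul_sq_le_sq_mul_sq Finset.univ (fun p : m × n => G p.1 p.2) (fun p => M p.1 p.2)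

lemma sum_sq_vecMulVec_add_vecMulVec (x y : n → ℝ) :
    ∑ a, ∑ b, (vecMulVec x y + vecMulVec y x) a b ^ 2
      = 2 * (x ⬝ᵥ x) * (y ⬝ᵥ y) + 2 * (x ⬝ᵥ y) ^ 2 := by
  calc ∑ a, ∑ b, (vecMulVec x y + vecMulVec y x) a b ^ 2
      = ∑ a, ∑ b, (x a ^ 2 * y b ^ 2 + y a ^ 2 * x b ^ 2 + 2 * (x a * y a) * (x b * y b)) := by
        simp only [Matrix.add_apply, vecMulVec_apply]
        exact Finset.sum_congr rfl fun a _ => Finset.sum_congr rfl fun b _ => by ring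
    _ = 2 * (x ⬝ᵥ x) * (y ⬝ᵥ y) + 2 * (x ⬝ᵥ y) ^ 2 := by
        simp only [Finset.sum_add_distrib, ← Finset.mul_sum, ← Finset.sum_mul, dotProduct, sq]
        ring

lemma sum_sq_mul_mul_of_mem_orthogonalGroup [DecidableEq n] {P₁ P₂ : Matrix n n ℝ}
    (h₁ : P₁ ∈ orthogonalGroup n ℝ) (h₂ : P₂ ∈ orthogonalGroup n ℝ) (M : Matrix n n ℝ) :
    ∑ a, ∑ b, (P₁ * M * P₂) a b ^ 2 = ∑ a, ∑ b, M a b ^ 2 := by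
  rw [mem_orthogonalGroup_iff'] at h₁
  rw [mem_orthogonalGroup_iff] at h₂
  have hconj : P₁ * M * P₂ * (P₁ * M * P₂)ᵀ = P₁ * (M * Mᵀ) * P₁ᵀ := by
    simp only [transpose_mul, Matrix.mul_assoc]
    rw [← Matrix.mul_assoc P₂, h₂, Matrix.one_mul]
  rw [sum_sq_eq_trace_mul_transpose, sum_sq_eq_trace_mul_transpose, hconj, trace_mul_comm,
    ← Matrix.mul_assoc, h₁, Matrix.one_mul]

end FrobeniusSum

lemma fderiv_apply_eq_sum_matGrad {N : ℕ} (f : Matrix (Fin N) (Fin N) ℝ → ℝ)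
    (X M : Matrix (Fin N) (Fin N) ℝ) :
    fderiv ℝ f X M = ∑ a, ∑ b, matGrad f X a b * M a b := by
  conv_lhs => rw [matrix_eq_sum_single M]
  simp only [map_sum, matGrad]
  refine Finset.sum_congr rfl fun a _ => Finset.sum_congr rfl fun b _ => ?_
  rw [show single a b (M a b) = M a b • single a b 1 by rw [smul_single, smul_eq_mul, mul_one],
    map_smul, smul_eq_mul, mul_comm]

section Householder

variable {N : ℕ}

lemma householder_eq (v : Fin N → ℝ) :
    householder v = 1 - (2 / (v ⬝ᵥ v)) • vecMulVec v v := by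
  simp [householder, dotProduct, sq]

lemma householder_mem_orthogonalGroup {v : Fin N → ℝ} (hv : v ⬝ᵥ v ≠ 0) :
    householder v ∈ orthogonalGroup (Fin N) ℝ := by
  have hsq : vecMulVec v v * vecMulVec v v = (v ⬝ᵥ v) • vecMulVec v v := by
    rw [vecMulVec_mul_vecMulVec, vecMulVec_smul]
  have hc : 2 / (v ⬝ᵥ v) * (2 / (v ⬝ᵥ v)) * (v ⬝ᵥ v) = 2 * (2 / (v ⬝ᵥ v)) := by
    field_simp
  rw [mem_orthogonalGroup_iff, householder_eq, transpose_sub, transpose_one, transpose_smul,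
    transpose_vecMulVec]
  simp only [sub_mul, mul_sub, Matrix.one_mul, Matrix.mul_one, smul_mul_smul, hsq, smul_smul, hc]
  module

noncomputable def householderDeriv (v u : Fin N → ℝ) : Matrix (Fin N) (Fin N) ℝ :=
  (4 * (v ⬝ᵥ u) / (v ⬝ᵥ v) ^ 2) • vecMulVec v v - (2 / (v ⬝ᵥ v)) • (vecMulVec u v + vecMulVec v u)

lemma householderDeriv_eq_neg_smul (v u : Fin N → ℝ) (hv : v ⬝ᵥ v ≠ 0) :
    householderDeriv v u = -(2 / (v ⬝ᵥ v)) •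
      (vecMulVec (u - (v ⬝ᵥ u / (v ⬝ᵥ v)) • v) v + vecMulVec v (u - (v ⬝ᵥ u / (v ⬝ᵥ v)) • v)) := by
  simp only [householderDeriv, sub_vecMulVec, vecMulVec_sub, smul_vecMulVec, vecMulVec_smul]
  rw [show 4 * (v ⬝ᵥ u) / (v ⬝ᵥ v) ^ 2 = 2 / (v ⬝ᵥ v) * (v ⬝ᵥ u / (v ⬝ᵥ v)) * 2 by
    field_simp; ring]
  module

lemma sum_sq_householderDeriv_le {v : Fin N → ℝ} (hv : 0 < v ⬝ᵥ v) (u : Fin N → ℝ) :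
    ∑ a, ∑ b, householderDeriv v u a b ^ 2 ≤ 8 * (u ⬝ᵥ u) / (v ⬝ᵥ v) := by
  have horth : (u - (v ⬝ᵥ u / (v ⬝ᵥ v)) • v) ⬝ᵥ v = 0 := by
    rw [sub_dotProduct, smul_dotProduct, smul_eq_mul, dotProduct_comm u]
    field_simp
    ring
  have hnorm : (u - (v ⬝ᵥ u / (v ⬝ᵥ v)) • v) ⬝ᵥ (u - (v ⬝ᵥ u / (v ⬝ᵥ v)) • v)
      = u ⬝ᵥ u - (v ⬝ᵥ u) ^ 2 / (v ⬝ᵥ v) := by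
    simp only [dotProduct_sub, sub_dotProduct, dotProduct_smul, smul_dotProduct, smul_eq_mul,
      dotProduct_comm u v]
    field_simp
    ring
  rw [householderDeriv_eq_neg_smul v u hv.ne']
  simp only [Matrix.smul_apply, smul_eq_mul, mul_pow, ← Finset.mul_sum,
    sum_sq_vecMulVec_add_vecMulVec, horth, hnorm]
  calc _ = 8 * (u ⬝ᵥ u) / (v ⬝ᵥ v) - 8 * (v ⬝ᵥ u) ^ 2 / (v ⬝ᵥ v) ^ 2 := by
        field_simp
        ring
    _ ≤ _ := sub_le_self _ (by positivity)

lemma sum_sq_householderDeriv_single_le {v : Fin N → ℝ} (hv : 0 < v ⬝ᵥ v) :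
    ∑ i, ∑ a, ∑ b, householderDeriv v (Pi.single i 1) a b ^ 2 ≤ 8 * N / (v ⬝ᵥ v) := by
  calc ∑ i, ∑ a, ∑ b, householderDeriv v (Pi.single i 1) a b ^ 2
      ≤ ∑ i : Fin N, 8 * (Pi.single i (1 : ℝ) ⬝ᵥ Pi.single i 1) / (v ⬝ᵥ v) :=
        Finset.sum_le_sum fun i _ => sum_sq_householderDeriv_le hv _
    _ = 8 * N / (v ⬝ᵥ v) := by
        simp only [dotProduct_single, Pi.single_eq_same, mul_one, Finset.sum_const,
          Finset.card_univ, Fintype.card_fin, nsmul_eq_mul]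
        ring

end Householder

section Products

variable {N L : ℕ}

noncomputable def prodHouseholderPrefix (vs : Fin L → Fin N → ℝ) (l : Fin L) :
    Matrix (Fin N) (Fin N) ℝ :=
  ((List.ofFn fun j => householder (vs j)).take l).prod

noncomputable def prodHouseholderSuffix (vs : Fin L → Fin N → ℝ) (l : Fin L) :
    Matrix (Fin N) (Fin N) ℝ :=
  ((List.ofFn fun j => householder (vs j)).drop (l + 1)).prod

lemma prodHouseholder_update (vs : Fin L → Fin N → ℝ) (l : Fin L) (w : Fin N → ℝ) :
    prodHouseholder (Function.update vs l w)
      = prodHouseholderPrefix vs l * householder w * prodHouseholderSuffix vs l := by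
  have hset : (List.ofFn fun j => householder (Function.update vs l w j))
      = (List.ofFn fun j => householder (vs j)).set l (householder w) := by
    refine List.ext_getElem (by simp) fun n _ _ => ?_
    simp only [List.getElem_set, List.getElem_ofFn, Function.update_apply]
    split_ifs <;> simp_all [Fin.ext_iff, eq_comm]
  rw [prodHouseholder, hset, List.prod_set, if_pos (by simp)]
  rfl

lemma prodHouseholder_eq (vs : Fin L → Fin N → ℝ) (l : Fin L) :
    prodHouseholder vs
      = prodHouseholderPrefix vs l * householder (vs l) * prodHouseholderSuffix vs l := by
  simpa using prodHouseholder_update vs l (vs l)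

lemma prodHouseholderPrefix_mem_orthogonalGroup {vs : Fin L → Fin N → ℝ}
    (hvs : ∀ l, vs l ⬝ᵥ vs l ≠ 0) (l : Fin L) :
    prodHouseholderPrefix vs l ∈ orthogonalGroup (Fin N) ℝ :=
  Submonoid.list_prod_mem _ fun _ hM => by
    obtain ⟨j, rfl⟩ := List.mem_ofFn.mp (List.mem_of_mem_take hM)
    exact householder_mem_orthogonalGroup (hvs j)

lemma prodHouseholderSuffix_mem_orthogonalGroup {vs : Fin L → Fin N → ℝ}
    (hvs : ∀ l, vs l ⬝ᵥ vs l ≠ 0) (l : Fin L) :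
    prodHouseholderSuffix vs l ∈ orthogonalGroup (Fin N) ℝ :=
  Submonoid.list_prod_mem _ fun _ hM => by
    obtain ⟨j, rfl⟩ := List.mem_ofFn.mp (List.mem_of_mem_drop hM)
    exact householder_mem_orthogonalGroup (hvs j)

end Products

section Derivatives

/- Mathlib's `TopologicalSpace (Matrix m n ℝ)` instance is not reducibly equal to the topology of
the Frobenius norm, which keeps `simp` lemmas about continuous linear maps from firing on
derivatives of matrix-valued maps; the product topology is. -/
@[reducible] def matrixPiTopology {m n : Type*} : TopologicalSpace (Matrix m n ℝ) :=
  Pi.topologicalSpace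

attribute [local instance] matrixPiTopology

lemma hasFDerivAt_householder {N : ℕ} {v : Fin N → ℝ} (hv : v ⬝ᵥ v ≠ 0) :
    ∃ D : (Fin N → ℝ) →L[ℝ] Matrix (Fin N) (Fin N) ℝ,
      HasFDerivAt householder D v ∧ ∀ u, D u = householderDeriv v u := by
  have hQ := (dotProductBilin ℝ ℝ).toContinuousBilinearMap.hasFDerivAt_of_bilinear
    (hasFDerivAt_id (𝕜 := ℝ) v) (hasFDerivAt_id v)
  have hM := (vecMulVecBilin ℝ ℝ).toContinuousBilinearMap.hasFDerivAt_of_bilinear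
    (hasFDerivAt_id (𝕜 := ℝ) v) (hasFDerivAt_id v)
  have hH := ((((hasFDerivAt_inv' hv).comp (f := fun w : Fin N → ℝ => w ⬝ᵥ w) v hQ).const_mul
    2).smul hM).const_sub 1
  refine ⟨_, hH.congr_of_eventuallyEq (.of_forall fun w => ?_), fun u => ?_⟩
  · simp [householder_eq, div_eq_mul_inv]
  · simp only [Function.comp_apply, id_eq, ContinuousLinearMap.precompR_apply,
      ContinuousLinearMap.compL_apply, ContinuousLinearMap.comp_id, smul_add,
      ContinuousLinearMap.comp_add, ContinuousLinearMap.neg_comp, smul_neg,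
      LinearMap.toContinuousBilinearMap_apply, vecMulVecBilin_apply_apply, neg_add_rev,
      _root_.add_apply, _root_.neg_apply, ContinuousLinearMap.smulRight_apply, _root_.smul_apply,
      ContinuousLinearMap.comp_apply, dotProductBilin_apply_apply,
      ContinuousLinearMap.mulLeftRight_apply, smul_eq_mul, ContinuousLinearMap.precompL_apply,
      ContinuousLinearMap.id_apply, dotProduct_comm u v, householderDeriv]
    module

lemma partialGradH_eq_sum_matGrad_mul {N L : ℕ} {f : Matrix (Fin N) (Fin N) ℝ → ℝ}
    {vs : Fin L → Fin N → ℝ} (hf : DifferentiableAt ℝ f (prodHouseholder vs)) {l : Fin L}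
    (hl : vs l ⬝ᵥ vs l ≠ 0) (i : Fin N) :
    partialGradH f vs l i = ∑ a, ∑ b, matGrad f (prodHouseholder vs) a b
      * (prodHouseholderPrefix vs l * householderDeriv (vs l) (Pi.single i 1)
        * prodHouseholderSuffix vs l) a b := by
  obtain ⟨D, hD, hDu⟩ := hasFDerivAt_householder hl
  let Φ : Matrix (Fin N) (Fin N) ℝ →L[ℝ] Matrix (Fin N) (Fin N) ℝ :=
    (LinearMap.mulRight ℝ (prodHouseholderSuffix vs l) ∘ₗ
      LinearMap.mulLeft ℝ (prodHouseholderPrefix vs l)).toContinuousLinearMap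
  have hF : HasFDerivAt (fun w => f (prodHouseholder (Function.update vs l w)))
      ((fderiv ℝ f (prodHouseholder vs)).comp (Φ.comp D)) (vs l) := by
    simp_rw [prodHouseholder_update]
    rw [prodHouseholder_eq vs l] at hf ⊢
    exact hf.hasFDerivAt.comp (vs l) (Φ.hasFDerivAt.comp (vs l) hD)
  rw [partialGradH, hF.fderiv]
  simp only [ContinuousLinearMap.comp_apply, hDu, LinearMap.coe_toContinuousLinearMap',
    LinearMap.coe_comp, Function.comp_apply, LinearMap.mulLeft_apply, LinearMap.mulRight_apply, Φ]
  exact fderiv_apply_eq_sum_matGrad _ _ _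

end Derivatives

lemma sum_sq_partialGradH_le {N L : ℕ} {f : Matrix (Fin N) (Fin N) ℝ → ℝ}
    {vs : Fin L → Fin N → ℝ} (hf : DifferentiableAt ℝ f (prodHouseholder vs))
    (hvs : ∀ l, 0 < vs l ⬝ᵥ vs l) (l : Fin L) :
    ∑ i, partialGradH f vs l i ^ 2
      ≤ 8 * N / (vs l ⬝ᵥ vs l) * ∑ i, ∑ j, matGrad f (prodHouseholder vs) i j ^ 2 := by
  set G := ∑ i, ∑ j, matGrad f (prodHouseholder vs) i j ^ 2
  have hP₁ := prodHouseholderPrefix_mem_orthogonalGroup (fun j => (hvs j).ne') l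
  have hP₂ := prodHouseholderSuffix_mem_orthogonalGroup (fun j => (hvs j).ne') l
  calc ∑ i, partialGradH f vs l i ^ 2
      ≤ ∑ i, G * ∑ a, ∑ b, householderDeriv (vs l) (Pi.single i 1) a b ^ 2 := by
        gcongr with i
        rw [partialGradH_eq_sum_matGrad_mul hf (hvs l).ne',
          ← sum_sq_mul_mul_of_mem_orthogonalGroup hP₁ hP₂]
        exact sum_sum_mul_sq_le_sq_mul_sq _ _
    _ = G * ∑ i, ∑ a, ∑ b, householderDeriv (vs l) (Pi.single i 1) a b ^ 2 :=
        (Finset.mul_sum ..).symm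
    _ ≤ G * (8 * N / (vs l ⬝ᵥ vs l)) := by
        gcongr
        exact sum_sq_householderDeriv_single_le (hvs l)
    _ = 8 * N / (vs l ⬝ᵥ vs l) * G := mul_comm _ _

/-- If `‖v⁽ˡ⁾‖₂ ≥ A > 0` for all `l`, then for `F(v⁽¹⁾, …, v⁽ᴸ⁾) = f(H(v⁽¹⁾) ⋯ H(v⁽ᴸ⁾))`,
each `‖∇_{v⁽ˡ⁾} F‖₂² ≤ (24/A²) N (N+2) ‖∇f(H(v⁽¹⁾) ⋯ H(v⁽ᴸ⁾))‖_F²`, and summing over `l`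
gives `∑_l ‖∇_{v⁽ˡ⁾} F‖₂² ≤ (24/A²) N (N+2) L ‖∇f(H(v⁽¹⁾) ⋯ H(v⁽ᴸ⁾))‖_F²`. -/
theorem partial_gradient_bound {N L : ℕ} (A : ℝ) (hA : 0 < A)
    (f : Matrix (Fin N) (Fin N) ℝ → ℝ) (hf : Differentiable ℝ f)
    (vs : Fin L → Fin N → ℝ) (hvs : ∀ l, A ≤ Real.sqrt (∑ k, vs l k ^ 2)) :
    (∀ l : Fin L, ∑ i, partialGradH f vs l i ^ 2
        ≤ 24 / A ^ 2 * N * ((N : ℝ) + 2)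
            * ∑ i, ∑ j, matGrad f (prodHouseholder vs) i j ^ 2) ∧
    ∑ l, ∑ i, partialGradH f vs l i ^ 2
        ≤ 24 / A ^ 2 * N * ((N : ℝ) + 2) * L
            * ∑ i, ∑ j, matGrad f (prodHouseholder vs) i j ^ 2 := by
  set G := ∑ i, ∑ j, matGrad f (prodHouseholder vs) i j ^ 2
  have hA_le : ∀ l, A ^ 2 ≤ vs l ⬝ᵥ vs l := fun l => by
    simpa [dotProduct, sq] using (Real.le_sqrt' hA).mp (hvs l)
  have hpos : ∀ l, 0 < vs l ⬝ᵥ vs l := fun l => (pow_pos hA 2).trans_le (hA_le l)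
  have hconst : ∀ l, 8 * N / (vs l ⬝ᵥ vs l) ≤ 24 / A ^ 2 * N * ((N : ℝ) + 2) := fun l =>
    calc 8 * N / (vs l ⬝ᵥ vs l) ≤ 8 * N / A ^ 2 := by gcongr; exact hA_le l
      _ ≤ 24 * N * ((N : ℝ) + 2) / A ^ 2 := by
        gcongr ?_ / _
        nlinarith [N.cast_nonneg (α := ℝ)]
      _ = 24 / A ^ 2 * N * ((N : ℝ) + 2) := by ring
  have hl : ∀ l, ∑ i, partialGradH f vs l i ^ 2 ≤ 24 / A ^ 2 * N * ((N : ℝ) + 2) * G :=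
    fun l => (sum_sq_partialGradH_le (hf _) hpos l).trans (by gcongr; exact hconst l)
  refine ⟨hl, ?_⟩
  calc ∑ l, ∑ i, partialGradH f vs l i ^ 2 ≤ ∑ _l : Fin L, 24 / A ^ 2 * N * ((N : ℝ) + 2) * G :=
        Finset.sum_le_sum fun l _ => hl l
    _ = 24 / A ^ 2 * N * ((N : ℝ) + 2) * L * G := by
        simp only [Finset.sum_const, Finset.card_univ, Fintype.card_fin, nsmul_eq_mul]
        ring
end

section
/- Let A > 0 and let f : ℝ^{N×N} → ℝ be differentiable with gradient that is Lipschitz on the orthogonal group with constant M₁ > 0 (i.e. ‖∇f(X′) − ∇f(X″)‖_F ≤ M₁ ‖X′ − X″‖_F for all X′, X″ ∈ O(N)) and bounded on the orthogonal group by M₂ > 0 (i.e. ‖∇f(X)‖_F² ≤ M₂ for all X ∈ O(N)). Let v^(1), …, v^(L) ∈ ℝ^N satisfy ‖v^(l)‖₂ > A for all l, and let d^(1), …, d^(L) ∈ ℝ^N satisfy ⟨v^(l), d^(l)⟩ = 0 for all l. Define h(η) = f( H(v^(1) − η d^(1)) ⋯ H(v^(L) − η d^(L)) ) for η ∈ ℝ.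 Then h is differentiable at every η ≥ 0 and |h′(η) − h′(0)| ≤ C · ( Σ_{l=1}^{L} ‖d^(l)‖₂² ) · η for all η ≥ 0, where C = (2L/A²) ( 5 √(6 M₂ (N + 2)) + √(2 M₂ + 48 M₁² (N + 2)) ( √(2 (N + 60)) + 8 √(6 N (N + 2)) ) ). -/
open scoped BigOperators Matrix

attribute [local instance] Matrix.frobeniusSeminormedAddCommGroup
  Matrix.frobeniusNormedAddCommGroup Matrix.frobeniusNormedSpace

/-- The Frobenius norm of a matrix. -/
noncomputable def frob {m n : ℕ} (M : Matrix (Fin m) (Fin n) ℝ) : ℝ :=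
  Real.sqrt (∑ i, ∑ j, M i j ^ 2)

/-!
Along the ray, `P(t) = H(v⁽¹⁾ - t d⁽¹⁾) ⋯ H(v⁽ᴸ⁾ - t d⁽ᴸ⁾)` is a differentiable curve in `O(N)`.
Since `⟨v, d⟩ = 0`, `‖v - t d‖² = ‖v‖² + t² ‖d‖² > A²`, and an explicit computation shows that each
factor has velocity of norm at most `8 ‖d‖ / A` and `‖H'(t) - H'(0)‖ ≤ 12 ‖d‖² |t| / A²`.
Multiplication by orthogonal matrices preserves the Frobenius norm, so by the product rule these
bounds propagate to `P` (`a = ∑ aₗ`, `b = ∑ bₗ + (∑ aₗ)²`), and the mean value theorem gives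
`‖P(t) - P(0)‖ ≤ a |t|`. Finally `h'(t) = ⟨∇f(P t), P'(t)⟩`, and
`h'(η) - h'(0) = ⟨∇f(P η) - ∇f(P 0), P'(η)⟩ + ⟨∇f(P 0), P'(η) - P'(0)⟩ ≤ (M₁ a² + √M₂ b) η`
by Cauchy–Schwarz; the paper's constant dominates this crudely.
-/

section Frobenius

variable {m n : Type*} [Fintype m] [Fintype n]

theorem Matrix.frobenius_norm_eq_sqrt (M : Matrix m n ℝ) : ‖M‖ = √(∑ i, ∑ j, M i j ^ 2) := by
  simp [frobenius_norm_def, Real.sqrt_eq_rpow]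

theorem frob_eq_norm {m n : ℕ} (M : Matrix (Fin m) (Fin n) ℝ) : frob M = ‖M‖ :=
  (Matrix.frobenius_norm_eq_sqrt M).symm

theorem Matrix.abs_sum_mul_le_frobenius_norm_mul (F G : Matrix m n ℝ) :
    |∑ i, ∑ j, F i j * G i j| ≤ ‖F‖ * ‖G‖ := by
  have h := abs_real_inner_le_norm (WithLp.toLp 2 fun i => WithLp.toLp 2 (F i))
    (WithLp.toLp 2 fun i => WithLp.toLp 2 (G i))
  simp only [PiLp.inner_apply, Real.inner_apply] at h
  exact h

theorem Matrix.frobenius_norm_vecMulVec (a : m → ℝ) (b : n → ℝ) :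
    ‖vecMulVec a b‖ = √(∑ i, a i ^ 2) * √(∑ j, b j ^ 2) := by
  simp only [frobenius_norm_eq_sqrt, vecMulVec_apply, mul_pow, ← Finset.mul_sum,
    ← Finset.sum_mul, Real.sqrt_mul' _ (Finset.sum_nonneg fun j _ => sq_nonneg (b j))]

theorem Matrix.frobenius_norm_eq_sqrt_trace (M : Matrix m n ℝ) :
    ‖M‖ = √(trace (Mᵀ * M)) := by
  rw [frobenius_norm_eq_sqrt, Finset.sum_comm]
  simp only [trace, diag, mul_apply, transpose_apply, sq]

variable [DecidableEq n]

theorem Matrix.frobenius_norm_orthogonal_mul {U : Matrix n n ℝ} (hU : Uᵀ * U = 1)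
    (X : Matrix n m ℝ) : ‖U * X‖ = ‖X‖ := by
  rw [frobenius_norm_eq_sqrt_trace, frobenius_norm_eq_sqrt_trace, transpose_mul,
    Matrix.mul_assoc, ← Matrix.mul_assoc Uᵀ, hU, Matrix.one_mul]

theorem Matrix.frobenius_norm_mul_orthogonal {U : Matrix n n ℝ} (hU : Uᵀ * U = 1)
    (X : Matrix m n ℝ) : ‖X * U‖ = ‖X‖ := by
  have hUt : Uᵀᵀ * Uᵀ = 1 := by rw [transpose_transpose]; exact mul_eq_one_comm.mp hU
  rw [← frobenius_norm_transpose, transpose_mul, frobenius_norm_orthogonal_mul hUt,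
    frobenius_norm_transpose]

end Frobenius

theorem HasDerivAt.matrix_mul {n : Type*} [Fintype n] [DecidableEq n]
    {X Y : ℝ → Matrix n n ℝ} {X' Y' : Matrix n n ℝ} {t : ℝ}
    (hX : HasDerivAt X X' t) (hY : HasDerivAt Y Y' t) :
    HasDerivAt (fun s => X s * Y s) (X' * Y t + X t * Y') t := by
  let _ : NormedRing (Matrix n n ℝ) := Matrix.frobeniusNormedRing
  let _ : NormedAlgebra ℝ (Matrix n n ℝ) := Matrix.frobeniusNormedAlgebra
  exact hX.mul hY

theorem fderiv_apply_eq_sum_mul_matGrad {N : ℕ} (f : Matrix (Fin N) (Fin N) ℝ → ℝ)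
    (X M : Matrix (Fin N) (Fin N) ℝ) :
    fderiv ℝ f X M = ∑ i, ∑ j, M i j * matGrad f X i j := by
  conv_lhs => rw [Matrix.matrix_eq_sum_single M]
  simp only [map_sum, matGrad]
  refine Finset.sum_congr rfl fun i _ => Finset.sum_congr rfl fun j _ => ?_
  rw [← smul_eq_mul, ← map_smul, Matrix.smul_single, smul_eq_mul, mul_one]

/-- Only the comparison of the velocity with the one at `t = 0` is recorded. -/
structure OrthogonalCurveBound {n : Type*} [Fintype n] [DecidableEq n]
    (P : ℝ → Matrix n n ℝ) (a b : ℝ) : Prop where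
  differentiable : Differentiable ℝ P
  orthogonal : ∀ t, (P t)ᵀ * P t = 1
  norm_deriv_le : ∀ t, ‖deriv P t‖ ≤ a
  norm_deriv_sub_le : ∀ t, ‖deriv P t - deriv P 0‖ ≤ b * |t|

namespace OrthogonalCurveBound

variable {n : Type*} [Fintype n] [DecidableEq n] {P Q : ℝ → Matrix n n ℝ} {a b a' b' : ℝ}

theorem nonneg (hP : OrthogonalCurveBound P a b) : 0 ≤ a :=
  (norm_nonneg _).trans (hP.norm_deriv_le 0)

theorem norm_sub_le (hP : OrthogonalCurveBound P a b) (t : ℝ) : ‖P t - P 0‖ ≤ a * |t| := by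
  simpa using convex_univ.norm_image_sub_le_of_norm_deriv_le
    (fun s _ => hP.differentiable s) (fun s _ => hP.norm_deriv_le s) (Set.mem_univ 0)
    (Set.mem_univ t)

theorem mono (hP : OrthogonalCurveBound P a b) (hb : b ≤ b') : OrthogonalCurveBound P a b' where
  __ := hP
  norm_deriv_sub_le t := (hP.norm_deriv_sub_le t).trans (by gcongr)

theorem one : OrthogonalCurveBound (fun _ => (1 : Matrix n n ℝ)) 0 0 := by
  have hderiv (t : ℝ) : deriv (fun _ : ℝ => (1 : Matrix n n ℝ)) t = 0 :=
    (hasDerivAt_const t _).deriv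
  refine ⟨differentiable_const 1, fun _ => by simp, fun t => ?_, fun t => ?_⟩ <;>
    simp [hderiv]

theorem mul (hP : OrthogonalCurveBound P a b) (hQ : OrthogonalCurveBound Q a' b') :
    OrthogonalCurveBound (fun t => P t * Q t) (a + a') (b + b' + 2 * a * a') := by
  have hasDeriv (t : ℝ) := (hP.differentiable t).hasDerivAt.matrix_mul
    (hQ.differentiable t).hasDerivAt
  have hderiv (t : ℝ) : deriv (fun s => P s * Q s) t = deriv P t * Q t + P t * deriv Q t :=
    (hasDeriv t).deriv
  refine ⟨fun t => (hasDeriv t).differentiableAt, fun t => ?_, fun t => ?_, fun t => ?_⟩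
  · rw [Matrix.transpose_mul, Matrix.mul_assoc, ← Matrix.mul_assoc (P t)ᵀ, hP.orthogonal,
      Matrix.one_mul, hQ.orthogonal]
  · rw [hderiv]
    calc ‖deriv P t * Q t + P t * deriv Q t‖
        ≤ ‖deriv P t * Q t‖ + ‖P t * deriv Q t‖ := norm_add_le _ _
      _ = ‖deriv P t‖ + ‖deriv Q t‖ := by
        rw [Matrix.frobenius_norm_mul_orthogonal (hQ.orthogonal t),
          Matrix.frobenius_norm_orthogonal_mul (hP.orthogonal t)]
      _ ≤ a + a' := add_le_add (hP.norm_deriv_le t) (hQ.norm_deriv_le t)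
  · have hsplit : deriv P t * Q t + P t * deriv Q t - (deriv P 0 * Q 0 + P 0 * deriv Q 0)
        = (deriv P t - deriv P 0) * Q t + deriv P 0 * (Q t - Q 0)
          + ((P t - P 0) * deriv Q t + P 0 * (deriv Q t - deriv Q 0)) := by
      simp only [Matrix.sub_mul, Matrix.mul_sub]
      abel
    rw [hderiv, hderiv, hsplit]
    have h₁ : ‖(deriv P t - deriv P 0) * Q t‖ ≤ b * |t| := by
      rw [Matrix.frobenius_norm_mul_orthogonal (hQ.orthogonal t)]
      exact hP.norm_deriv_sub_le t
    have h₂ : ‖deriv P 0 * (Q t - Q 0)‖ ≤ a * (a' * |t|) :=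
      (Matrix.frobenius_norm_mul _ _).trans
        (mul_le_mul (hP.norm_deriv_le 0) (hQ.norm_sub_le t) (norm_nonneg _) hP.nonneg)
    have h₃ : ‖(P t - P 0) * deriv Q t‖ ≤ a * |t| * a' :=
      (Matrix.frobenius_norm_mul _ _).trans (mul_le_mul (hP.norm_sub_le t) (hQ.norm_deriv_le t)
        (norm_nonneg _) (mul_nonneg hP.nonneg (abs_nonneg t)))
    have h₄ : ‖P 0 * (deriv Q t - deriv Q 0)‖ ≤ b' * |t| := by
      rw [Matrix.frobenius_norm_orthogonal_mul (hP.orthogonal 0)]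
      exact hQ.norm_deriv_sub_le t
    calc _ ≤ ‖(deriv P t - deriv P 0) * Q t‖ + ‖deriv P 0 * (Q t - Q 0)‖
          + (‖(P t - P 0) * deriv Q t‖ + ‖P 0 * (deriv Q t - deriv Q 0)‖) :=
          (norm_add_le _ _).trans (add_le_add (norm_add_le _ _) (norm_add_le _ _))
      _ ≤ (b + b' + 2 * a * a') * |t| := by linarith

theorem list_prod_ofFn {L : ℕ} {P : Fin L → ℝ → Matrix n n ℝ} {a b : Fin L → ℝ}
    (hP : ∀ l, OrthogonalCurveBound (P l) (a l) (b l)) :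
    OrthogonalCurveBound (fun t => (List.ofFn fun l => P l t).prod)
      (∑ l, a l) (∑ l, b l + (∑ l, a l) ^ 2) := by
  induction L with
  | zero => simpa using one
  | succ L ih =>
    simp only [List.ofFn_succ, List.prod_cons, Fin.sum_univ_succ]
    refine ((hP 0).mul (ih fun l => hP l.succ)).mono ?_
    nlinarith [sq_nonneg (a 0)]

theorem abs_deriv_comp_sub_le {N : ℕ} {f : Matrix (Fin N) (Fin N) ℝ → ℝ}
    {P : ℝ → Matrix (Fin N) (Fin N) ℝ} {M₁ K : ℝ} (hP : OrthogonalCurveBound P a b)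
    (hf : Differentiable ℝ f) (hM₁ : 0 ≤ M₁) (t : ℝ)
    (hLip : ‖matGrad f (P t) - matGrad f (P 0)‖ ≤ M₁ * ‖P t - P 0‖)
    (hK : ‖matGrad f (P 0)‖ ≤ K) :
    |deriv (fun s => f (P s)) t - deriv (fun s => f (P s)) 0| ≤ (M₁ * a ^ 2 + K * b) * |t| := by
  have hderiv (s : ℝ) :
      deriv (fun s => f (P s)) s = ∑ i, ∑ j, deriv P s i j * matGrad f (P s) i j := by
    rw [← fderiv_apply_eq_sum_mul_matGrad]
    exact fderiv_comp_deriv s (hf _) (hP.differentiable s)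
  have hsplit : ∑ i, ∑ j, deriv P t i j * matGrad f (P t) i j
        - ∑ i, ∑ j, deriv P 0 i j * matGrad f (P 0) i j
      = ∑ i, ∑ j, deriv P t i j * (matGrad f (P t) - matGrad f (P 0)) i j
        + ∑ i, ∑ j, (deriv P t - deriv P 0) i j * matGrad f (P 0) i j := by
    simp only [Matrix.sub_apply, sub_mul, mul_sub, Finset.sum_sub_distrib]
    ring
  have hGrad : ‖matGrad f (P t) - matGrad f (P 0)‖ ≤ M₁ * (a * |t|) :=
    hLip.trans (mul_le_mul_of_nonneg_left (hP.norm_sub_le t) hM₁)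
  rw [hderiv, hderiv, hsplit]
  calc _ ≤ ‖deriv P t‖ * ‖matGrad f (P t) - matGrad f (P 0)‖
        + ‖deriv P t - deriv P 0‖ * ‖matGrad f (P 0)‖ :=
        (abs_add_le _ _).trans (add_le_add (Matrix.abs_sum_mul_le_frobenius_norm_mul _ _)
          (Matrix.abs_sum_mul_le_frobenius_norm_mul _ _))
    _ ≤ a * (M₁ * (a * |t|)) + b * |t| * K :=
        add_le_add (mul_le_mul (hP.norm_deriv_le t) hGrad (norm_nonneg _) hP.nonneg)
          (mul_le_mul (hP.norm_deriv_sub_le t) hK (norm_nonneg _)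
            ((norm_nonneg _).trans (hP.norm_deriv_sub_le t)))
    _ = (M₁ * a ^ 2 + K * b) * |t| := by ring

end OrthogonalCurveBound

section HouseholderRay

open Matrix

variable {N : ℕ}

theorem householder_transpose (u : Fin N → ℝ) : (householder u)ᵀ = householder u := by
  rw [householder, transpose_sub, transpose_one, transpose_smul, transpose_vecMulVec]

theorem householder_transpose_mul_self {u : Fin N → ℝ} (hu : ∑ k, u k ^ 2 ≠ 0) :
    (householder u)ᵀ * householder u = 1 := by
  have hsq : vecMulVec u u * vecMulVec u u = (∑ k, u k ^ 2) • vecMulVec u u := by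
    simp only [vecMulVec_mul_vecMulVec, vecMulVec_smul, dotProduct, sq]
  rw [householder_transpose, householder]
  generalize ∑ k, u k ^ 2 = w at hu hsq ⊢
  simp only [sub_mul, mul_sub, Matrix.one_mul, Matrix.mul_one, Matrix.smul_mul, Matrix.mul_smul,
    hsq, smul_smul]
  match_scalars <;> field_simp
  ring

theorem abs_mul_sqrt_le_sqrt_add_sq_mul {W D : ℝ} (hW : 0 ≤ W) (hD : 0 ≤ D) (t : ℝ) :
    |t| * √D ≤ √(W + t ^ 2 * D) :=
  Real.le_sqrt_of_sq_le (by rw [mul_pow, sq_abs, Real.sq_sqrt hD]; linarith)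

variable {v d : Fin N → ℝ}

theorem sum_sub_mul_sq (hd : ∑ k, v k * d k = 0) (t : ℝ) :
    ∑ k, (v k - t * d k) ^ 2 = ∑ k, v k ^ 2 + t ^ 2 * ∑ k, d k ^ 2 := by
  have hexp (k : Fin N) :
      (v k - t * d k) ^ 2 = v k ^ 2 - 2 * t * (v k * d k) + t ^ 2 * d k ^ 2 := by
    ring
  simp only [hexp, Finset.sum_add_distrib, Finset.sum_sub_distrib, ← Finset.mul_sum, hd,
    mul_zero, sub_zero]

noncomputable def householderRayDeriv (v d : Fin N → ℝ) (t : ℝ) : Matrix (Fin N) (Fin N) ℝ :=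
  let u : Fin N → ℝ := fun k => v k - t * d k
  let r2 := ∑ k, v k ^ 2 + t ^ 2 * ∑ k, d k ^ 2
  (4 * t * (∑ k, d k ^ 2) / r2 ^ 2) • vecMulVec u u + (2 / r2) • (vecMulVec d u + vecMulVec u d)

theorem hasDerivAt_householder_ray (hv : 0 < ∑ k, v k ^ 2) (hd : ∑ k, v k * d k = 0) (t : ℝ) :
    HasDerivAt (fun s => householder fun k => v k - s * d k) (householderRayDeriv v d t) t := by
  simp only [householderRayDeriv]
  set W := ∑ k, v k ^ 2
  set D := ∑ k, d k ^ 2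
  have hr2 : W + t ^ 2 * D ≠ 0 := by positivity
  have hH : (fun s => householder fun k => v k - s * d k) = fun s => 1 - (2 / (W + s ^ 2 * D)) •
      (vecMulVec v v - s • (vecMulVec v d + vecMulVec d v) + s ^ 2 • vecMulVec d d) := by
    funext s
    rw [householder, sum_sub_mul_sq hd]
    congr 2
    ext i j
    simp only [vecMulVec_apply, Matrix.sub_apply, Matrix.add_apply, Matrix.smul_apply, smul_eq_mul]
    ring
  have hc := (hasDerivAt_const t (2 : ℝ)).div
    (((hasDerivAt_pow 2 t).mul_const D).const_add W) hr2
  have hQ := (((hasDerivAt_id t).smul_const (vecMulVec v d + vecMulVec d v)).const_sub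
    (vecMulVec v v)).add ((hasDerivAt_pow 2 t).smul_const (vecMulVec d d))
  rw [hH]
  refine ((hc.smul hQ).const_sub 1).congr_deriv ?_
  ext i j
  simp only [vecMulVec_apply, Matrix.sub_apply, Matrix.add_apply, Matrix.smul_apply, smul_eq_mul,
    Matrix.neg_apply, Pi.add_apply, Pi.div_apply, id_eq, one_mul, Nat.cast_ofNat]
  field_simp
  ring

theorem norm_householderRayDeriv_le {A : ℝ} (hA : 0 < A) (hv : A ^ 2 < ∑ k, v k ^ 2)
    (hd : ∑ k, v k * d k = 0) (t : ℝ) :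
    ‖householderRayDeriv v d t‖ ≤ 8 / A * √(∑ k, d k ^ 2) := by
  simp only [householderRayDeriv]
  set u : Fin N → ℝ := fun k => v k - t * d k
  set s := √(∑ k, d k ^ 2)
  set r := √(∑ k, v k ^ 2 + t ^ 2 * ∑ k, d k ^ 2)
  have hs2 : s ^ 2 = ∑ k, d k ^ 2 := Real.sq_sqrt (by positivity)
  have hr2 : r ^ 2 = ∑ k, v k ^ 2 + t ^ 2 * ∑ k, d k ^ 2 := Real.sq_sqrt (by positivity)
  have hAr : A < r := (Real.lt_sqrt hA.le).mpr (by nlinarith)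
  have hr0 : 0 < r := hA.trans hAr
  have hts : |t| * s ≤ r := abs_mul_sqrt_le_sqrt_add_sq_mul (by positivity) (by positivity) t
  have hu : √(∑ k, u k ^ 2) = r := by rw [sum_sub_mul_sq hd]
  have hnorm_uu : ‖vecMulVec u u‖ = r * r := by rw [frobenius_norm_vecMulVec, hu]
  have hnorm_du : ‖vecMulVec d u‖ = s * r := by rw [frobenius_norm_vecMulVec, hu]
  have hnorm_ud : ‖vecMulVec u d‖ = r * s := by rw [frobenius_norm_vecMulVec, hu]
  rw [← hr2, ← hs2]
  calc _ ≤ |4 * t * s ^ 2 / (r ^ 2) ^ 2| * ‖vecMulVec u u‖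
        + |2 / r ^ 2| * (‖vecMulVec d u‖ + ‖vecMulVec u d‖) := by
        refine (norm_add_le _ _).trans ?_
        rw [norm_smul, norm_smul, Real.norm_eq_abs, Real.norm_eq_abs]
        gcongr
        exact norm_add_le _ _
    _ = 4 * s * (|t| * s) / r ^ 2 + 4 * s / r := by
        rw [hnorm_uu, hnorm_du, hnorm_ud, abs_div, abs_div, abs_mul, abs_mul]
        simp only [abs_pow, sq_abs, abs_of_pos hr0, Nat.abs_ofNat]
        field_simp
        ring
    _ ≤ 4 * s * r / r ^ 2 + 4 * s / r := by gcongr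
    _ = 8 * s / r := by field_simp; ring
    _ ≤ 8 / A * s := by rw [mul_div_right_comm]; gcongr

theorem householderRayDeriv_sub_zero (hv : 0 < ∑ k, v k ^ 2) (t : ℝ) :
    householderRayDeriv v d t - householderRayDeriv v d 0
      = (4 * t * (∑ k, d k ^ 2) / (∑ k, v k ^ 2 + t ^ 2 * ∑ k, d k ^ 2) ^ 2)
          • vecMulVec (fun k => v k - t * d k) (fun k => v k - t * d k)
        + (-(2 * t ^ 2 * ∑ k, d k ^ 2)
            / ((∑ k, v k ^ 2 + t ^ 2 * ∑ k, d k ^ 2) * ∑ k, v k ^ 2))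
          • (vecMulVec v d + vecMulVec d v)
        + (-(4 * t) / (∑ k, v k ^ 2 + t ^ 2 * ∑ k, d k ^ 2)) • vecMulVec d d := by
  have hr2 : ∑ k, v k ^ 2 + t ^ 2 * ∑ k, d k ^ 2 ≠ 0 := by positivity
  ext i j
  simp only [householderRayDeriv, vecMulVec_apply, Matrix.sub_apply, Matrix.add_apply,
    Matrix.smul_apply, smul_eq_mul, ne_eq, OfNat.ofNat_ne_zero, not_false_eq_true, zero_pow,
    zero_mul, mul_zero, add_zero, sub_zero, zero_div]
  field_simp
  ring

theorem norm_householderRayDeriv_sub_le {A : ℝ} (hA : 0 < A) (hv : A ^ 2 < ∑ k, v k ^ 2)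
    (hd : ∑ k, v k * d k = 0) (t : ℝ) :
    ‖householderRayDeriv v d t - householderRayDeriv v d 0‖
      ≤ 12 / A ^ 2 * (∑ k, d k ^ 2) * |t| := by
  have hW : 0 < ∑ k, v k ^ 2 := (sq_pos_of_pos hA).trans hv
  rw [householderRayDeriv_sub_zero hW]
  set u : Fin N → ℝ := fun k => v k - t * d k
  set p := √(∑ k, v k ^ 2)
  set s := √(∑ k, d k ^ 2)
  set r := √(∑ k, v k ^ 2 + t ^ 2 * ∑ k, d k ^ 2)
  have hp2 : p ^ 2 = ∑ k, v k ^ 2 := Real.sq_sqrt hW.le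
  have hs2 : s ^ 2 = ∑ k, d k ^ 2 := Real.sq_sqrt (by positivity)
  have hr2 : r ^ 2 = ∑ k, v k ^ 2 + t ^ 2 * ∑ k, d k ^ 2 := Real.sq_sqrt (by positivity)
  have hAp : A < p := (Real.lt_sqrt hA.le).mpr hv
  have hAr : A < r := (Real.lt_sqrt hA.le).mpr (by nlinarith)
  have hp0 : 0 < p := hA.trans hAp
  have hr0 : 0 < r := hA.trans hAr
  have hs0 : 0 ≤ s := Real.sqrt_nonneg _
  have hts : |t| * s ≤ r := abs_mul_sqrt_le_sqrt_add_sq_mul hW.le (by positivity) t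
  have hnorm_uu : ‖vecMulVec u u‖ = r * r := by rw [frobenius_norm_vecMulVec, sum_sub_mul_sq hd]
  rw [← hr2, ← hp2, ← hs2]
  calc _ ≤ |4 * t * s ^ 2 / (r ^ 2) ^ 2| * ‖vecMulVec u u‖
        + |-(2 * t ^ 2 * s ^ 2) / (r ^ 2 * p ^ 2)| * (‖vecMulVec v d‖ + ‖vecMulVec d v‖)
        + |-(4 * t) / r ^ 2| * ‖vecMulVec d d‖ := by
        refine norm_add₃_le.trans ?_
        rw [norm_smul, norm_smul, norm_smul, Real.norm_eq_abs, Real.norm_eq_abs, Real.norm_eq_abs]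
        gcongr
        exact norm_add_le _ _
    _ = 4 * |t| * s ^ 2 / r ^ 2 + 4 * |t| * s ^ 2 * (|t| * s) / (r ^ 2 * p)
        + 4 * |t| * s ^ 2 / r ^ 2 := by
        rw [hnorm_uu, frobenius_norm_vecMulVec v d, frobenius_norm_vecMulVec d v,
          frobenius_norm_vecMulVec d d, abs_div, abs_div, abs_div, abs_neg, abs_neg]
        simp only [abs_mul, abs_pow, abs_of_nonneg hs0, abs_of_pos hr0, abs_of_pos hp0,
          Nat.abs_ofNat]
        field_simp
        ring
    _ ≤ 4 * |t| * s ^ 2 / A ^ 2 + 4 * |t| * s ^ 2 * r / (r ^ 2 * p)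
        + 4 * |t| * s ^ 2 / A ^ 2 := by gcongr
    _ = 4 * |t| * s ^ 2 / A ^ 2 + 4 * |t| * s ^ 2 / (r * p) + 4 * |t| * s ^ 2 / A ^ 2 := by
        field_simp
    _ ≤ 4 * |t| * s ^ 2 / A ^ 2 + 4 * |t| * s ^ 2 / (A * A) + 4 * |t| * s ^ 2 / A ^ 2 := by
        gcongr
    _ = 12 / A ^ 2 * s ^ 2 * |t| := by ring

theorem orthogonalCurveBound_householder_ray {A : ℝ} (hA : 0 < A) (hv : A ^ 2 < ∑ k, v k ^ 2)
    (hd : ∑ k, v k * d k = 0) :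
    OrthogonalCurveBound (fun t => householder fun k => v k - t * d k)
      (8 / A * √(∑ k, d k ^ 2)) (12 / A ^ 2 * ∑ k, d k ^ 2) := by
  have hasDeriv (t : ℝ) := hasDerivAt_householder_ray ((sq_pos_of_pos hA).trans hv) hd t
  have hderiv (t : ℝ) :
      deriv (fun s => householder fun k => v k - s * d k) t = householderRayDeriv v d t :=
    (hasDeriv t).deriv
  refine ⟨fun t => (hasDeriv t).differentiableAt, fun t => ?_, fun t => ?_, fun t => ?_⟩
  · refine householder_transpose_mul_self (ne_of_gt ?_)
    rw [sum_sub_mul_sq hd]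
    nlinarith [sq_nonneg t, Finset.sum_nonneg fun k (_ : k ∈ Finset.univ) => sq_nonneg (d k)]
  · rw [hderiv]
    exact norm_householderRayDeriv_le hA hv hd t
  · rw [hderiv, hderiv]
    exact norm_householderRayDeriv_sub_le hA hv hd t

end HouseholderRay

noncomputable def rayConstant (N : ℕ) (M₁ M₂ : ℝ) : ℝ :=
  5 * √(6 * M₂ * ((N : ℝ) + 2))
    + √(2 * M₂ + 48 * M₁ ^ 2 * ((N : ℝ) + 2))
      * (√(2 * ((N : ℝ) + 60)) + 8 * √(6 * N * ((N : ℝ) + 2)))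

theorem le_two_mul_rayConstant {N : ℕ} {M₁ M₂ : ℝ} (hN : 1 ≤ N) (hM₁ : 0 ≤ M₁) (hM₂ : 0 ≤ M₂) :
    64 * M₁ + 76 * √M₂ ≤ 2 * rayConstant N M₁ M₂ := by
  have hN' : (1 : ℝ) ≤ N := by exact_mod_cast hN
  have h₁ : 4 * √M₂ ≤ √(6 * M₂ * ((N : ℝ) + 2)) := by
    rw [show 4 * √M₂ = √(16 * M₂) by rw [Real.sqrt_mul (by norm_num)]; norm_num]
    exact Real.sqrt_le_sqrt (by nlinarith)
  set x := √(2 * M₂ + 48 * M₁ ^ 2 * ((N : ℝ) + 2))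
  have hx₁ : 12 * M₁ ≤ x := Real.le_sqrt_of_sq_le (by nlinarith)
  have hx₂ : √M₂ ≤ x := Real.sqrt_le_sqrt (by nlinarith)
  have h₂ : 11 ≤ √(2 * ((N : ℝ) + 60)) := Real.le_sqrt_of_sq_le (by nlinarith)
  have h₃ : 4 ≤ √(6 * N * ((N : ℝ) + 2)) := Real.le_sqrt_of_sq_le (by nlinarith)
  have h₄ : x * 43 ≤ x * (√(2 * ((N : ℝ) + 60)) + 8 * √(6 * N * ((N : ℝ) + 2))) :=
    mul_le_mul_of_nonneg_left (by linarith) (Real.sqrt_nonneg _)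
  rw [rayConstant]
  linarith

theorem mul_sq_add_sqrt_mul_le_rayConstant {N L : ℕ} {A M₁ M₂ : ℝ} (hA : 0 < A)
    (hM₁ : 0 ≤ M₁) (hM₂ : 0 ≤ M₂) (d : Fin L → Fin N → ℝ) :
    M₁ * (∑ l, 8 / A * √(∑ k, d l k ^ 2)) ^ 2
        + √M₂ * (∑ l, 12 / A ^ 2 * ∑ k, d l k ^ 2 + (∑ l, 8 / A * √(∑ k, d l k ^ 2)) ^ 2)
      ≤ 2 * L / A ^ 2 * rayConstant N M₁ M₂ * ∑ l, ∑ k, d l k ^ 2 := by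
  rcases Nat.eq_zero_or_pos N with rfl | hN
  · simp
  set Q := ∑ l, ∑ k, d l k ^ 2
  have ha : (∑ l, 8 / A * √(∑ k, d l k ^ 2)) ^ 2 ≤ 64 / A ^ 2 * (L * Q) := by
    calc _ ≤ (L : ℝ) * ∑ l, (8 / A * √(∑ k, d l k ^ 2)) ^ 2 := by
          simpa using sq_sum_le_card_mul_sum_sq (s := Finset.univ)
            (f := fun l => 8 / A * √(∑ k, d l k ^ 2))
      _ = 64 / A ^ 2 * (L * Q) := by
          simp only [mul_pow, div_pow, Real.sq_sqrt (Finset.sum_nonneg fun _ _ => sq_nonneg _),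
            ← Finset.mul_sum, Q]
          ring
  have hQ : Q ≤ L * Q :=
    calc Q ≤ ∑ _l : Fin L, Q := Finset.sum_le_sum fun l _ =>
          Finset.single_le_sum (f := fun l => ∑ k, d l k ^ 2)
            (fun _ _ => Finset.sum_nonneg fun _ _ => sq_nonneg _) (Finset.mem_univ l)
      _ = L * Q := by simp
  have hE := le_two_mul_rayConstant hN hM₁ hM₂
  have hb : ∑ l, 12 / A ^ 2 * ∑ k, d l k ^ 2 = 12 / A ^ 2 * Q := (Finset.mul_sum ..).symm
  rw [hb]
  calc _ ≤ M₁ * (64 / A ^ 2 * (L * Q))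
          + √M₂ * (12 / A ^ 2 * (L * Q) + 64 / A ^ 2 * (L * Q)) := by
        gcongr
    _ = (64 * M₁ + 76 * √M₂) * (L * Q) / A ^ 2 := by ring
    _ ≤ 2 * rayConstant N M₁ M₂ * (L * Q) / A ^ 2 := by gcongr
    _ = _ := by ring

/-- Smoothness along the SGD ray: if `∇f` is `M₁`-Lipschitz and has squared Frobenius norm
at most `M₂` on the orthogonal group, `‖v⁽ˡ⁾‖₂ > A` and `⟨v⁽ˡ⁾, d⁽ˡ⁾⟩ = 0` for all `l`,
then `h(η) = f(H(v⁽¹⁾ − η d⁽¹⁾) ⋯ H(v⁽ᴸ⁾ − η d⁽ᴸ⁾))` is differentiable at every `η ≥ 0`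
and `|h′(η) − h′(0)| ≤ C (∑_l ‖d⁽ˡ⁾‖₂²) η` with
`C = (2L/A²)(5√(6M₂(N+2)) + √(2M₂ + 48M₁²(N+2))(√(2(N+60)) + 8√(6N(N+2))))`. -/
theorem sgd_ray_gradient_lipschitz {N L : ℕ} (A : ℝ) (hA : 0 < A)
    (f : Matrix (Fin N) (Fin N) ℝ → ℝ) (hf : Differentiable ℝ f)
    (M₁ : ℝ) (hM₁ : 0 < M₁)
    (hLip : ∀ X' X'' : Matrix (Fin N) (Fin N) ℝ, X'ᵀ * X' = 1 → X''ᵀ * X'' = 1 →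
      frob (matGrad f X' - matGrad f X'') ≤ M₁ * frob (X' - X''))
    (M₂ : ℝ) (hM₂ : 0 < M₂)
    (hBnd : ∀ X : Matrix (Fin N) (Fin N) ℝ, Xᵀ * X = 1 →
      ∑ i, ∑ j, matGrad f X i j ^ 2 ≤ M₂)
    (v d : Fin L → Fin N → ℝ)
    (hv : ∀ l, A < Real.sqrt (∑ k, v l k ^ 2))
    (hd : ∀ l, ∑ k, v l k * d l k = 0) :
    ∀ η : ℝ, 0 ≤ η →
      DifferentiableAt ℝ
        (fun t : ℝ => f (prodHouseholder fun l k => v l k - t * d l k)) η ∧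
      |deriv (fun t : ℝ => f (prodHouseholder fun l k => v l k - t * d l k)) η
          - deriv (fun t : ℝ => f (prodHouseholder fun l k => v l k - t * d l k)) 0|
        ≤ (2 * L / A ^ 2) * (5 * Real.sqrt (6 * M₂ * ((N : ℝ) + 2))
              + Real.sqrt (2 * M₂ + 48 * M₁ ^ 2 * ((N : ℝ) + 2))
                * (Real.sqrt (2 * ((N : ℝ) + 60)) + 8 * Real.sqrt (6 * N * ((N : ℝ) + 2))))
            * (∑ l, ∑ k, d l k ^ 2) * η := by
  intro η hη
  have hP := OrthogonalCurveBound.list_prod_ofFn fun l =>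
    orthogonalCurveBound_householder_ray hA ((Real.lt_sqrt hA.le).mp (hv l)) (hd l)
  have hLip' := hLip _ _ (hP.orthogonal η) (hP.orthogonal 0)
  rw [frob_eq_norm, frob_eq_norm] at hLip'
  have hBnd' : ‖matGrad f (prodHouseholder fun l k => v l k - 0 * d l k)‖ ≤ √M₂ := by
    rw [Matrix.frobenius_norm_eq_sqrt]
    exact Real.sqrt_le_sqrt (hBnd _ (hP.orthogonal 0))
  refine ⟨(hf _).comp η (hP.differentiable η),
    (hP.abs_deriv_comp_sub_le hf hM₁.le η hLip' hBnd').trans ?_⟩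
  rw [abs_of_nonneg hη]
  exact mul_le_mul_of_nonneg_right (mul_sq_add_sqrt_mul_le_rayConstant hA hM₁.le hM₂.le d) hη
end
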